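/- arXiv:math/0607006 — 5 statements merged into one kernel-verified Lean document; each statement's English description precedes it below -/
import Mathlib

section
/- For angles θ₁,…,θ_{k−1}, the product exp(θ₁H₁)⋯exp(θ_{k−1}H_{k−1}) applied to the standard basis vector e₁ ∈ ℝ^n yields a vector whose entries at positions 1, s₁+1, …, s_{k−1}+1 are a₁,…,a_k respectively (and 0 elsewhere), where a_i = sinθ_{i−1}·cosθ_i·cosθ_{i+1}⋯cosθ_{k−1} (with the convention sinθ₀ = 1, i.e. a₁ = cosθ₁⋯cosθ_{k−1} and a_k = sinθ_{k−1}). -/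
/-!
`H = E_{p,0} - E_{0,p}` sends `e₀ ↦ e_p ↦ -e₀` and kills every other `e_r`, so summing the
exponential series, `exp (θ • H)` rotates the plane of `e₀, e_p` by `θ` and fixes the other
basis vectors. In `exp (θ₀ • H₀) ⋯ exp (θ_m • H_m) e₀` the last factor produces
`cos θ_m • e₀ + sin θ_m • e_{q_m}`; the earlier factors fix `e_{q_m}` because the positions
`q_t` are distinct and nonzero, so induction on `m` multiplies the old coefficients by `cos θ_m`
and adds the new one `sin θ_m`.
-/

open Matrix

/-- The matrix unit `E_{i,j}` (0-based indices) in `M(n, R)`; zero if indices out of range. -/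
def Eu (R : Type*) [Zero R] [One R] (n i j : ℕ) : Matrix (Fin n) (Fin n) R :=
  fun a b => if a.1 = i ∧ b.1 = j then 1 else 0

open Finset
open scoped Nat

section ExpMulVec

variable {ι : Type*} [Fintype ι] [DecidableEq ι]

theorem Matrix.hasSum_exp_smul_mulVec (A : Matrix ι ι ℝ) (θ : ℝ) (v : ι → ℝ) :
    HasSum (fun m : ℕ => ((m ! : ℝ)⁻¹ * θ ^ m) • (A ^ m *ᵥ v))
      (NormedSpace.exp (θ • A) *ᵥ v) := by
  let : NormedRing (Matrix ι ι ℝ) := Matrix.linftyOpNormedRing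
  let : NormedAlgebra ℝ (Matrix ι ι ℝ) := Matrix.linftyOpNormedAlgebra
  convert (NormedSpace.exp_series_hasSum_exp' (𝕂 := ℝ) (θ • A)).map
    ((mulVecBilin ℝ ℝ).flip v) (LinearMap.continuous_of_finiteDimensional _) using 1
  · funext m
    simp [smul_pow, smul_smul]
  · rfl

theorem Matrix.exp_smul_mulVec_of_mulVec_eq_zero {A : Matrix ι ι ℝ} (θ : ℝ) {v : ι → ℝ}
    (h : A *ᵥ v = 0) : NormedSpace.exp (θ • A) *ᵥ v = v := by
  refine (A.hasSum_exp_smul_mulVec θ v).unique ?_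
  convert hasSum_ite_eq 0 v with m
  rcases m with _ | m
  · simp
  · simp [pow_succ, ← Matrix.mulVec_mulVec, h]

theorem Matrix.pow_mulVec_of_rotation {A : Matrix ι ι ℝ} {u w : ι → ℝ}
    (hu : A *ᵥ u = w) (hw : A *ᵥ w = -u) (m : ℕ) :
    A ^ (2 * m) *ᵥ u = (-1 : ℝ) ^ m • u ∧ A ^ (2 * m + 1) *ᵥ u = (-1 : ℝ) ^ m • w := by
  induction m with
  | zero => simp [hu]
  | succ m ih =>
    have heven : A ^ (2 * (m + 1)) *ᵥ u = (-1 : ℝ) ^ (m + 1) • u := by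
      rw [show 2 * (m + 1) = 2 * m + 1 + 1 by ring, _root_.pow_succ', ← mulVec_mulVec, ih.2,
        mulVec_smul, hw, _root_.pow_succ, smul_neg]
      module
    refine ⟨heven, ?_⟩
    rw [_root_.pow_succ', ← mulVec_mulVec, heven, mulVec_smul, hu]

theorem Matrix.exp_smul_mulVec_of_rotation {A : Matrix ι ι ℝ} (θ : ℝ) {u w : ι → ℝ}
    (hu : A *ᵥ u = w) (hw : A *ᵥ w = -u) :
    NormedSpace.exp (θ • A) *ᵥ u = Real.cos θ • u + Real.sin θ • w := by
  refine (A.hasSum_exp_smul_mulVec θ u).unique (HasSum.even_add_odd ?_ ?_)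
  · convert (Real.hasSum_cos θ).smul_const u using 2 with m
    rw [(pow_mulVec_of_rotation hu hw m).1, smul_smul]
    field_simp
  · convert (Real.hasSum_sin θ).smul_const w using 2 with m
    rw [(pow_mulVec_of_rotation hu hw m).2, smul_smul]
    field_simp

theorem List.prod_mulVec_eq_self {L : List (Matrix ι ι ℝ)} {v : ι → ℝ}
    (h : ∀ M ∈ L, M *ᵥ v = v) : L.prod *ᵥ v = v := by
  induction L with
  | nil => simp
  | cons M L ih =>
    rw [List.forall_mem_cons] at h
    rw [List.prod_cons, ← mulVec_mulVec, ih h.2, h.1]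

end ExpMulVec

def natBasis (R : Type*) [Zero R] [One R] (N m : ℕ) : Fin N → R :=
  fun a => if a.1 = m then 1 else 0

theorem Eu_mulVec_natBasis {R : Type*} [NonAssocSemiring R] {N : ℕ} (p q : ℕ) {r : ℕ}
    (hr : r < N) : Eu R N p q *ᵥ natBasis R N r = if q = r then natBasis R N p else 0 := by
  funext a
  rw [mulVec, dotProduct, Finset.sum_eq_single ⟨r, hr⟩]
  · split_ifs with hqr
    · simp [Eu, natBasis, hqr]
    · simp [Eu, natBasis, Ne.symm hqr]
  · intro b _ hb
    simp [natBasis, Fin.val_ne_of_ne hb]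
  · simp

def rotGen (N p : ℕ) : Matrix (Fin N) (Fin N) ℝ := Eu ℝ N p 0 - Eu ℝ N 0 p

section RotGen

variable {N p : ℕ}

theorem rotGen_mulVec_natBasis_zero (hN : 0 < N) (hp : p ≠ 0) :
    rotGen N p *ᵥ natBasis ℝ N 0 = natBasis ℝ N p := by
  simp [rotGen, sub_mulVec, Eu_mulVec_natBasis _ _ hN, hp]

theorem rotGen_mulVec_natBasis_self (hpN : p < N) (hp : p ≠ 0) :
    rotGen N p *ᵥ natBasis ℝ N p = -natBasis ℝ N 0 := by
  simp [rotGen, sub_mulVec, Eu_mulVec_natBasis _ _ hpN, hp.symm]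

theorem rotGen_mulVec_natBasis_of_ne {r : ℕ} (hrN : r < N) (hr : r ≠ 0) (hrp : r ≠ p) :
    rotGen N p *ᵥ natBasis ℝ N r = 0 := by
  simp [rotGen, sub_mulVec, Eu_mulVec_natBasis _ _ hrN, hr.symm, hrp.symm]

theorem exp_smul_rotGen_mulVec_natBasis_zero (θ : ℝ) (hpN : p < N) (hp : p ≠ 0) :
    NormedSpace.exp (θ • rotGen N p) *ᵥ natBasis ℝ N 0
      = Real.cos θ • natBasis ℝ N 0 + Real.sin θ • natBasis ℝ N p :=
  exp_smul_mulVec_of_rotation θ (rotGen_mulVec_natBasis_zero (by omega) hp)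
    (rotGen_mulVec_natBasis_self hpN hp)

theorem exp_smul_rotGen_mulVec_natBasis_of_ne (θ : ℝ) {r : ℕ} (hrN : r < N) (hr : r ≠ 0)
    (hrp : r ≠ p) : NormedSpace.exp (θ • rotGen N p) *ᵥ natBasis ℝ N r = natBasis ℝ N r :=
  exp_smul_mulVec_of_mulVec_eq_zero θ (rotGen_mulVec_natBasis_of_ne hrN hr hrp)

end RotGen

theorem prod_exp_smul_rotGen_mulVec_natBasis_zero {N : ℕ} (θ : ℕ → ℝ) (q : ℕ → ℕ) (m : ℕ)
    (hqN : ∀ t < m, q t < N) (hq0 : ∀ t < m, q t ≠ 0) (hq : Set.InjOn q (Set.Iio m)) :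
    (List.ofFn fun t : Fin m => NormedSpace.exp (θ t • rotGen N (q t))).prod *ᵥ natBasis ℝ N 0
      = (∏ t ∈ range m, Real.cos (θ t)) • natBasis ℝ N 0
        + ∑ t ∈ range m,
            (Real.sin (θ t) * ∏ s ∈ Ico (t + 1) m, Real.cos (θ s)) • natBasis ℝ N (q t) := by
  induction m with
  | zero => simp
  | succ m ih =>
    have hfix : (List.ofFn fun t : Fin m => NormedSpace.exp (θ t • rotGen N (q t))).prod
        *ᵥ natBasis ℝ N (q m) = natBasis ℝ N (q m) := by
      refine List.prod_mulVec_eq_self fun M hM => ?_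
      obtain ⟨t, rfl⟩ := List.mem_ofFn.1 hM
      refine exp_smul_rotGen_mulVec_natBasis_of_ne _ (hqN m m.lt_succ_self)
        (hq0 m m.lt_succ_self) fun h => ?_
      exact absurd (hq (by simp) (by simp [t.2.trans m.lt_succ_self]) h) (by omega)
    have hsum : ∑ t ∈ range m,
          (Real.sin (θ t) * ∏ s ∈ Ico (t + 1) (m + 1), Real.cos (θ s)) • natBasis ℝ N (q t)
        = Real.cos (θ m) • ∑ t ∈ range m,
          (Real.sin (θ t) * ∏ s ∈ Ico (t + 1) m, Real.cos (θ s)) • natBasis ℝ N (q t) := by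
      rw [smul_sum]
      refine sum_congr rfl fun t ht => ?_
      rw [prod_Ico_succ_top (mem_range.1 ht), smul_smul, mul_comm (Real.cos _), mul_assoc]
    rw [List.ofFn_succ', List.prod_concat, ← mulVec_mulVec, Fin.val_last,
      exp_smul_rotGen_mulVec_natBasis_zero _ (hqN m m.lt_succ_self) (hq0 m m.lt_succ_self),
      mulVec_add, mulVec_smul, mulVec_smul]
    simp only [Fin.val_castSucc]
    rw [hfix, ih (fun t ht => hqN t (by omega)) (fun t ht => hq0 t (by omega))
      (hq.mono (Set.Iio_subset_Iio m.le_succ)), prod_range_succ, sum_range_succ, hsum, Ico_self,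
      prod_empty, mul_one]
    module

theorem strictMonoOn_sum_range {M : Type*} [AddCommMonoid M] [PartialOrder M]
    [IsOrderedCancelAddMonoid M] {f : ℕ → M} {k : ℕ} (hf : ∀ i < k, 0 < f i) :
    StrictMonoOn (fun i => ∑ s ∈ range i, f s) (Set.Iic k) :=
  strictMonoOn_Iic_of_lt_succ fun i hi => by simpa [sum_range_succ] using hf i hi

/-- Indices are 0-based: `θ t` is the paper's `θ_{t+1}`, `∑ s ∈ range i, ns s` is `s_i`, and
entry `s_i` is the paper's position `s_i + 1`. -/
theorem exp_rotations_apply_e1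
    (n k : ℕ) (hk : 0 < k) (ns : ℕ → ℕ) (hns : ∀ i < k, 0 < ns i)
    (hn : n = ∑ t ∈ Finset.range k, ns t)
    (θ : ℕ → ℝ) :
    ∀ j : Fin n,
      ((List.ofFn (fun t : Fin (k-1) =>
          NormedSpace.exp (θ t.1 • (Eu ℝ n (∑ s ∈ Finset.range (t.1+1), ns s) 0
            - Eu ℝ n 0 (∑ s ∈ Finset.range (t.1+1), ns s))))).prod).mulVec
        (fun a : Fin n => if a.1 = 0 then (1:ℝ) else 0) j
      = ∑ i ∈ Finset.range k,
          if j.1 = ∑ s ∈ Finset.range i, ns s then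
            (if i = 0 then 1 else Real.sin (θ (i-1)))
              * ∏ t ∈ Finset.Ico i (k-1), Real.cos (θ t)
          else 0 := by
  intro j
  obtain ⟨m, rfl⟩ : ∃ m, k = m + 1 := ⟨k - 1, by omega⟩
  have hS := strictMonoOn_sum_range hns
  have hrot := prod_exp_smul_rotGen_mulVec_natBasis_zero (N := n) θ
    (fun t => ∑ s ∈ range (t + 1), ns s) m
    (fun t ht => hn ▸ hS (Set.mem_Iic.2 (by omega)) (Set.mem_Iic.2 le_rfl) (by omega))
    (fun t ht => (hS (Set.mem_Iic.2 (Nat.zero_le _)) (Set.mem_Iic.2 (by omega)) t.succ_pos).ne')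
    (fun a ha b hb h => Nat.succ_injective <|
      hS.injOn (Set.mem_Iic.2 (Nat.succ_le_succ ha.le)) (Set.mem_Iic.2 (Nat.succ_le_succ hb.le)) h)
  rw [Nat.add_sub_cancel]
  refine (congrFun hrot j).trans ?_
  simp only [Pi.add_apply, Pi.smul_apply, Finset.sum_apply, smul_eq_mul, natBasis, mul_ite, mul_one,
    mul_zero]
  rw [sum_range_succ' _ m, add_comm]
  congr 1
  simp
end

section
/- With notation as in the block-loop construction: if P ∈ M(n,ℂ) satisfies Ad(L)P ∩ M(n,ℝ) ≠ ∅ for L = U(n₁)×⋯×U(n_k), then for every loop i₀→⋯→i_l the characteristic polynomial det(λI − A_{i₀⋯i_l}(P)) has real coefficients. -/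
open Matrix
open scoped Pointwise

/-- Index type for `ℂ^n = ℂ^{n₁} ⊕ ⋯ ⊕ ℂ^{n_k}`. -/
abbrev SIdx (k : ℕ) (ns : Fin k → ℕ) := (j : Fin k) × Fin (ns j)

variable {k : ℕ} {ns : Fin k → ℕ}

/-- The `(i,j)`-block of a matrix written in block form for the partition `ns`. -/
def blockOf (ns : Fin k → ℕ) (P : Matrix (SIdx k ns) (SIdx k ns) ℂ) (i j : Fin k) :
    Matrix (Fin (ns i)) (Fin (ns j)) ℂ :=
  fun a b => P ⟨i, a⟩ ⟨j, b⟩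

/-- `P̃_{ij}`: equals `P_{ij}` for `i < j` and `(P_{ji})*` for `i > j`. -/
def tildeBlock (ns : Fin k → ℕ) (P : Matrix (SIdx k ns) (SIdx k ns) ℂ) (i j : Fin k) :
    Matrix (Fin (ns i)) (Fin (ns j)) ℂ :=
  if i < j then blockOf ns P i j else (blockOf ns P j i)ᴴ

/-- Embedding of an `(i,j)`-block back into a full `n × n` matrix (all other blocks 0). -/
def embedBlock (ns : Fin k → ℕ) (i j : Fin k) (M : Matrix (Fin (ns i)) (Fin (ns j)) ℂ) :
    Matrix (SIdx k ns) (SIdx k ns) ℂ :=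
  fun a b =>
    if h : a.1 = i ∧ b.1 = j then
      M (Fin.cast (congrArg ns h.1) a.2) (Fin.cast (congrArg ns h.2) b.2)
    else 0

/-- The block-loop matrix `A_{i₀⋯i_l}(P) = P̃_{i₀i₁} P̃_{i₁i₂} ⋯ P̃_{i_{l−1}i_l}`,
computed via the embedded blocks and extracted as the `(i₀, i_l)`-block. -/
noncomputable def loopA (ns : Fin k → ℕ) (P : Matrix (SIdx k ns) (SIdx k ns) ℂ)
    (l : ℕ) (c : Fin (l+1) → Fin k) :
    Matrix (Fin (ns (c 0))) (Fin (ns (c (Fin.last l)))) ℂ :=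
  blockOf ns
    ((List.ofFn (fun t : Fin l =>
        embedBlock ns (c t.castSucc) (c t.succ)
          (tildeBlock ns P (c t.castSucc) (c t.succ)))).prod)
    (c 0) (c (Fin.last l))

/-- The block-diagonal matrix `diag(u₁,…,u_k)`. -/
def bdiag (ns : Fin k → ℕ) (u : (j : Fin k) → Matrix (Fin (ns j)) (Fin (ns j)) ℂ) :
    Matrix (SIdx k ns) (SIdx k ns) ℂ :=
  fun a b =>
    if h : a.1 = b.1 then u a.1 a.2 (Fin.cast (congrArg ns h.symm) b.2) else 0

/-!
Write `U = diag(u₁,…,u_k)` and `Q = U P U*`. Conjugation by `U` acts blockwise, and since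
`(u_j P_{ji} u_i*)* = u_i P_{ji}* u_j*` it sends `P̃_{ij}` to `u_i P̃_{ij} u_j*`; hence
`A_{i₀⋯i_l}(Q) = u_{i₀} A_{i₀⋯i_l}(P) u_{i_l}*`. For a loop (`i_l = i₀`) this is a unitary
similarity, so both matrices have the same characteristic polynomial, and that of `A(Q)` is
real because `Q` is real, so all its tilde-blocks and their products are real.
-/

lemma mem_range_mapMatrix_ofRealHom_iff {n : Type*} [Fintype n] [DecidableEq n]
    {X : Matrix n n ℂ} :
    X ∈ (Complex.ofRealHom.mapMatrix : Matrix n n ℝ →+* Matrix n n ℂ).range ↔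
      ∀ a b, (X a b).im = 0 := by
  constructor
  · rintro ⟨B, rfl⟩ a b
    simp
  · intro h
    refine ⟨X.map Complex.re, ?_⟩
    ext a b
    apply Complex.ext <;> simp [h]

lemma charpoly_coeff_im_eq_zero {n : Type*} [Fintype n] [DecidableEq n] {A : Matrix n n ℂ}
    (hA : ∀ a b, (A a b).im = 0) (m : ℕ) : (A.charpoly.coeff m).im = 0 := by
  obtain ⟨B, rfl⟩ := mem_range_mapMatrix_ofRealHom_iff.mpr hA
  rw [RingHom.mapMatrix_apply, charpoly_map, Polynomial.coeff_map]
  simp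

lemma charpoly_unitary_conj {n : Type*} [Fintype n] [DecidableEq n] {U : Matrix n n ℂ}
    (hU : U ∈ unitaryGroup n ℂ) (A : Matrix n n ℂ) : (U * A * Uᴴ).charpoly = A.charpoly := by
  rw [charpoly_mul_comm, ← Matrix.mul_assoc, ← star_eq_conjTranspose,
    mem_unitaryGroup_iff'.mp hU, Matrix.one_mul]

lemma bdiag_eq_blockDiagonal' (u : (j : Fin k) → Matrix (Fin (ns j)) (Fin (ns j)) ℂ) :
    bdiag ns u = blockDiagonal' u := by
  ext ⟨i, a⟩ ⟨j, b⟩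
  by_cases h : i = j
  · subst h; simp [bdiag]
  · simp [bdiag, h, blockDiagonal'_apply_ne]

lemma blockDiagonal'_mem_unitaryGroup {u : (j : Fin k) → Matrix (Fin (ns j)) (Fin (ns j)) ℂ}
    (hu : ∀ j, u j ∈ unitaryGroup (Fin (ns j)) ℂ) :
    blockDiagonal' u ∈ unitaryGroup (SIdx k ns) ℂ := by
  rw [mem_unitaryGroup_iff, star_eq_conjTranspose, blockDiagonal'_conjTranspose,
    ← blockDiagonal'_mul]
  simp only [← star_eq_conjTranspose, fun j => mem_unitaryGroup_iff.mp (hu j)]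
  exact blockDiagonal'_one

lemma ext_blockOf {X Y : Matrix (SIdx k ns) (SIdx k ns) ℂ}
    (h : ∀ i j, blockOf ns X i j = blockOf ns Y i j) : X = Y := by
  ext ⟨i, a⟩ ⟨j, b⟩
  exact congrFun₂ (h i j) a b

lemma blockOf_blockDiagonal'_mul (u : (j : Fin k) → Matrix (Fin (ns j)) (Fin (ns j)) ℂ)
    (X : Matrix (SIdx k ns) (SIdx k ns) ℂ) (i j : Fin k) :
    blockOf ns (blockDiagonal' u * X) i j = u i * blockOf ns X i j := by
  ext a b
  simp only [blockOf, mul_apply, Fintype.sum_sigma]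
  rw [Finset.sum_eq_single i]
  · simp [blockDiagonal'_apply_eq]
  · intro i' _ hi'
    simp [blockDiagonal'_apply_ne _ _ _ hi'.symm]
  · simp

lemma blockOf_mul_blockDiagonal' (v : (j : Fin k) → Matrix (Fin (ns j)) (Fin (ns j)) ℂ)
    (X : Matrix (SIdx k ns) (SIdx k ns) ℂ) (i j : Fin k) :
    blockOf ns (X * blockDiagonal' v) i j = blockOf ns X i j * v j := by
  ext a b
  simp only [blockOf, mul_apply, Fintype.sum_sigma]
  rw [Finset.sum_eq_single j]
  · simp [blockDiagonal'_apply_eq]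
  · intro j' _ hj'
    simp [blockDiagonal'_apply_ne _ _ _ hj']
  · simp

lemma blockOf_embedBlock_self (i j : Fin k) (M : Matrix (Fin (ns i)) (Fin (ns j)) ℂ) :
    blockOf ns (embedBlock ns i j M) i j = M := by
  ext a b
  simp [blockOf, embedBlock]

lemma blockOf_embedBlock_of_ne {i j i' j' : Fin k} (h : ¬(i' = i ∧ j' = j))
    (M : Matrix (Fin (ns i)) (Fin (ns j)) ℂ) :
    blockOf ns (embedBlock ns i j M) i' j' = 0 := by
  ext a b
  simp [blockOf, embedBlock, h]

lemma embedBlock_conj (u v : (j : Fin k) → Matrix (Fin (ns j)) (Fin (ns j)) ℂ)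
    (i j : Fin k) (M : Matrix (Fin (ns i)) (Fin (ns j)) ℂ) :
    embedBlock ns i j (u i * M * v j)
      = blockDiagonal' u * embedBlock ns i j M * blockDiagonal' v := by
  refine ext_blockOf fun i' j' => ?_
  rw [blockOf_mul_blockDiagonal', blockOf_blockDiagonal'_mul]
  by_cases h : i' = i ∧ j' = j
  · obtain ⟨rfl, rfl⟩ := h
    simp only [blockOf_embedBlock_self]
  · simp only [blockOf_embedBlock_of_ne h, Matrix.mul_zero, Matrix.zero_mul]

lemma tildeBlock_conj (u : (j : Fin k) → Matrix (Fin (ns j)) (Fin (ns j)) ℂ)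
    (P : Matrix (SIdx k ns) (SIdx k ns) ℂ) (i j : Fin k) :
    tildeBlock ns (blockDiagonal' u * P * blockDiagonal' (fun j => (u j)ᴴ)) i j
      = u i * tildeBlock ns P i j * (u j)ᴴ := by
  unfold tildeBlock
  split_ifs
  · rw [blockOf_mul_blockDiagonal', blockOf_blockDiagonal'_mul]
  · rw [blockOf_mul_blockDiagonal', blockOf_blockDiagonal'_mul]
    simp only [conjTranspose_mul, conjTranspose_conjTranspose, Matrix.mul_assoc]

lemma loopA_blockDiagonal'_conj {u : (j : Fin k) → Matrix (Fin (ns j)) (Fin (ns j)) ℂ}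
    (hu : ∀ j, u j ∈ unitaryGroup (Fin (ns j)) ℂ) (P : Matrix (SIdx k ns) (SIdx k ns) ℂ)
    (l : ℕ) (c : Fin (l + 1) → Fin k) :
    loopA ns (blockDiagonal' u * P * blockDiagonal' (fun j => (u j)ᴴ)) l c
      = u (c 0) * loopA ns P l c * (u (c (Fin.last l)))ᴴ := by
  let conjU := Unitary.conjStarAlgAut ℂ _ ⟨_, blockDiagonal'_mem_unitaryGroup hu⟩
  have hconjU : ∀ X, conjU X = blockDiagonal' u * X * blockDiagonal' (fun j => (u j)ᴴ) := by
    intro X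
    simp [conjU, star_eq_conjTranspose, blockDiagonal'_conjTranspose]
  have hblocks : (List.ofFn fun t : Fin l => embedBlock ns (c t.castSucc) (c t.succ)
      (tildeBlock ns (conjU P) (c t.castSucc) (c t.succ)))
      = (List.ofFn fun t : Fin l => embedBlock ns (c t.castSucc) (c t.succ)
          (tildeBlock ns P (c t.castSucc) (c t.succ))).map conjU := by
    simp only [List.map_ofFn, Function.comp_def, hconjU, tildeBlock_conj, ← embedBlock_conj]
  rw [← hconjU, loopA, hblocks, ← map_list_prod, hconjU, blockOf_mul_blockDiagonal',
    blockOf_blockDiagonal'_mul]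
  rfl

lemma tildeBlock_im_eq_zero {Q : Matrix (SIdx k ns) (SIdx k ns) ℂ} (hQ : ∀ a b, (Q a b).im = 0)
    (i j : Fin k) (a : Fin (ns i)) (b : Fin (ns j)) : (tildeBlock ns Q i j a b).im = 0 := by
  unfold tildeBlock
  split_ifs
  · exact hQ _ _
  · simp [blockOf, hQ]

lemma embedBlock_im_eq_zero {i j : Fin k} {M : Matrix (Fin (ns i)) (Fin (ns j)) ℂ}
    (hM : ∀ a b, (M a b).im = 0) (a b : SIdx k ns) : (embedBlock ns i j M a b).im = 0 := by
  unfold embedBlock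
  split_ifs
  · exact hM _ _
  · rfl

lemma loopA_im_eq_zero {Q : Matrix (SIdx k ns) (SIdx k ns) ℂ} (hQ : ∀ a b, (Q a b).im = 0)
    (l : ℕ) (c : Fin (l + 1) → Fin k) (a : Fin (ns (c 0))) (b : Fin (ns (c (Fin.last l)))) :
    (loopA ns Q l c a b).im = 0 := by
  refine mem_range_mapMatrix_ofRealHom_iff.mp (Subring.list_prod_mem _ ?_) _ _
  simp only [List.mem_ofFn, forall_exists_index]
  rintro _ t rfl
  exact mem_range_mapMatrix_ofRealHom_iff.mpr
    (embedBlock_im_eq_zero (tildeBlock_im_eq_zero hQ _ _))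

lemma charpoly_submatrix_cast_coeff_im_eq_zero
    {u : (j : Fin k) → Matrix (Fin (ns j)) (Fin (ns j)) ℂ}
    (hu : ∀ j, u j ∈ unitaryGroup (Fin (ns j)) ℂ) {i j : Fin k} (h : j = i)
    (A : Matrix (Fin (ns i)) (Fin (ns j)) ℂ) (hA : ∀ a b, ((u i * A * (u j)ᴴ) a b).im = 0)
    (m : ℕ) : ((A.submatrix id (Fin.cast (congrArg ns h.symm))).charpoly.coeff m).im = 0 := by
  subst h
  simpa [charpoly_unitary_conj (hu j)] using charpoly_coeff_im_eq_zero hA m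

/-- Lemma 5.2, contrapositive form: if `Ad(L)P` contains a real matrix,
where `L = U(n₁)×⋯×U(n_k)` is block-diagonal, then for every loop `i₀→⋯→i_l`
(`i₀ = i_l`, consecutive indices distinct, `l ≥ 2`) the characteristic polynomial of
`A_{i₀⋯i_l}(P)` has real coefficients. -/
theorem loopA_charpoly_real_of_real_in_orbit (k : ℕ) (ns : Fin k → ℕ)
    (P : Matrix (SIdx k ns) (SIdx k ns) ℂ)
    (hreal : ∃ u : (j : Fin k) → Matrix (Fin (ns j)) (Fin (ns j)) ℂ,
      (∀ j, u j ∈ Matrix.unitaryGroup (Fin (ns j)) ℂ) ∧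
      ∀ a b, ((bdiag ns u * P * (bdiag ns u)⁻¹) a b).im = 0) :
    ∀ (l : ℕ), 2 ≤ l → ∀ (c : Fin (l+1) → Fin k) (hloop : c (Fin.last l) = c 0),
      (∀ t : Fin l, c t.castSucc ≠ c t.succ) →
      ∀ m : ℕ,
        ((Matrix.charpoly ((loopA ns P l c).submatrix
          id (Fin.cast (congrArg ns hloop.symm)))).coeff m).im = 0 := by
  obtain ⟨u, hu, hQ⟩ := hreal
  have hinv : (blockDiagonal' u)⁻¹ = blockDiagonal' fun j => (u j)ᴴ := by
    rw [← blockDiagonal'_conjTranspose, ← star_eq_conjTranspose]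
    exact inv_eq_left_inv (mem_unitaryGroup_iff'.mp (blockDiagonal'_mem_unitaryGroup hu))
  rw [bdiag_eq_blockDiagonal', hinv] at hQ
  intro l _ c hloop _ m
  refine charpoly_submatrix_cast_coeff_im_eq_zero hu hloop _ ?_ m
  rw [← loopA_blockDiagonal'_conj hu]
  exact loopA_im_eq_zero hQ l c
end

section
/- Let n = n₁+⋯+n_k, L = U(n₁)×⋯×U(n_k) ⊂ U(n), G' = O(n), and let J be a block-diagonal real matrix J = diag(J₁,…,J_k) with J_i ∈ M(n_i,ℝ). If there exist a skew-Hermitian matrix X ∈ 𝔲(n) and a loop i₀→⋯→i_l such that the characteristic polynomial det(λI − A_{i₀⋯i_l}([X,J])) does not have all real coefficients, then the multiplication map L × G' × G_J → U(n) is not surjective. -/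
open Matrix
open scoped Pointwise

variable {k : ℕ} {ns : Fin k → ℕ}

namespace LoopAux

open Polynomial


variable {ι : Type*} [Fintype ι] [DecidableEq ι]

lemma coeff_eval₂_CuX {R : Type*} [CommRing R] (u : R) (p : R[X]) (m : ℕ) :
    (p.eval₂ C (C u * X)).coeff m = u ^ m * p.coeff m := by
  rw [Polynomial.eval₂_eq_sum_range, Polynomial.finset_sum_coeff]
  have h : ∀ i ∈ Finset.range (p.natDegree + 1),
      (C (p.coeff i) * (C u * X) ^ i).coeff m
        = if i = m then p.coeff i * u ^ i else 0 := by
    intro i _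
    rw [mul_pow, ← C_pow, ← mul_assoc, ← C_mul, coeff_C_mul_X_pow]
    simp [eq_comm]
  rw [Finset.sum_congr rfl h, Finset.sum_ite_eq' (Finset.range (p.natDegree + 1)) m]
  by_cases hm : m ∈ Finset.range (p.natDegree + 1)
  · rw [if_pos hm]; ring
  · rw [if_neg hm]
    rw [Finset.mem_range, not_lt] at hm
    rw [coeff_eq_zero_of_natDegree_lt (by omega), mul_zero]

lemma charmatrix_eq {R : Type*} [CommRing R] (M : Matrix ι ι R) :
    charmatrix M = (X : R[X]) • (1 : Matrix ι ι R[X]) - M.map C := by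
  ext i j
  by_cases hij : i = j
  · subst hij
    simp [Matrix.smul_apply, Matrix.one_apply, Matrix.map_apply]
  · simp [charmatrix_apply_ne _ _ _ hij, Matrix.smul_apply, Matrix.one_apply, hij,
      Matrix.map_apply]

lemma charpoly_smul_coeff {R : Type*} [CommRing R] (u : R) (W : Matrix ι ι R) (m : ℕ) :
    u ^ m * ((u • W).charpoly.coeff m) = u ^ (Fintype.card ι) * (W.charpoly.coeff m) := by
  have hmap : (charmatrix (u • W)).map (eval₂RingHom C (C u * X)) = C u • charmatrix W := by
    rw [charmatrix_eq, charmatrix_eq]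
    ext i j : 2
    by_cases hij : i = j
    · subst hij
      simp only [Matrix.map_apply, Matrix.sub_apply, Matrix.smul_apply, Matrix.one_apply_eq,
        smul_eq_mul, mul_one, coe_eval₂RingHom]
      simp [eval₂_sub, C_mul, mul_sub]
    · simp only [Matrix.map_apply, Matrix.sub_apply, Matrix.smul_apply,
        Matrix.one_apply_ne hij, smul_eq_mul, mul_zero, zero_sub, coe_eval₂RingHom]
      simp [C_mul]
  have key : (eval₂RingHom C (C u * X)) ((u • W).charpoly)
      = C (u ^ Fintype.card ι) * W.charpoly := by
    rw [Matrix.charpoly, Matrix.charpoly, RingHom.map_det, RingHom.mapMatrix_apply, hmap, Matrix.det_smul, C_pow]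
  have h2 := congrArg (fun p => p.coeff m) key
  simp only [coeff_C_mul] at h2
  rw [← h2, coe_eval₂RingHom, coeff_eval₂_CuX]

lemma charpoly_unitary_conj (V N : Matrix ι ι ℂ) (h1 : V * Vᴴ = 1) :
    (V * N * Vᴴ).charpoly = N.charpoly := by
  have hVV : V.map C * Vᴴ.map C = 1 := by
    rw [← Matrix.map_mul, h1, Matrix.map_one _ (map_zero C) (map_one C)]
  have hc : charmatrix (V * N * Vᴴ) = V.map C * charmatrix N * Vᴴ.map C := by
    rw [charmatrix_eq, charmatrix_eq, mul_sub, sub_mul, mul_smul_comm, mul_one,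
      smul_mul_assoc, hVV, Matrix.map_mul, Matrix.map_mul]
  rw [Matrix.charpoly, Matrix.charpoly, hc, det_mul, det_mul, mul_comm, ← mul_assoc,
    ← det_mul]
  have : Vᴴ.map C * V.map C = 1 := by
    rw [← Matrix.map_mul]
    have h2 : Vᴴ * V = 1 := mul_eq_one_comm.mp h1
    rw [h2, Matrix.map_one _ (map_zero C) (map_one C)]
  rw [this, det_one, one_mul]

lemma conj_eval (p : Polynomial ℂ) (t : ℝ) :
    (starRingEnd ℂ) (p.eval (t : ℂ)) = (p.map (starRingEnd ℂ)).eval (t : ℂ) := by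
  induction p using Polynomial.induction_on' with
  | add p q hp hq => simp [hp, hq]
  | monomial n a =>
      simp [Polynomial.eval_monomial, _root_.map_mul, map_pow, Complex.conj_ofReal]

lemma charpoly_coeff_real (M : Matrix ι ι ℂ) (hM : M.map (starRingEnd ℂ) = M) (m : ℕ) :
    (M.charpoly.coeff m).im = 0 := by
  have h := Matrix.charpoly_map M (starRingEnd ℂ)
  rw [hM] at h
  have h2 : M.charpoly.coeff m = (starRingEnd ℂ) (M.charpoly.coeff m) := by
    conv_lhs => rw [h]
    simp [Polynomial.coeff_map]
  exact Complex.conj_eq_iff_im.mp h2.symm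



variable {ι : Type*} [Fintype ι] [DecidableEq ι]

/-- map a ring hom through a list product of matrices -/
lemma prod_map {R S : Type*} [CommRing R] [CommRing S] (f : R →+* S)
    (L : List (Matrix ι ι R)) :
    (L.prod).map f = (L.map (fun M => M.map f)).prod := by
  have : (L.prod).map f = f.mapMatrix L.prod := rfl
  rw [this, map_list_prod]
  rfl

lemma prod_conj {M₀ : Type*} [Monoid M₀] (a b : M₀) (hab : a * b = 1) (hba : b * a = 1)
    (L : List M₀) :
    (L.map fun e => a * e * b).prod = a * L.prod * b := by
  induction L with
  | nil => simp [hab]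
  | cons e L ih =>
      simp only [List.map_cons, List.prod_cons, ih]
      calc a * e * b * (a * L.prod * b) = a * e * (b * a) * L.prod * b := by
            simp only [mul_assoc]
        _ = a * (e * L.prod) * b := by rw [hba]; simp only [mul_assoc, one_mul]

lemma prod_smul {R : Type*} [CommRing R] (s : R) (L : List (Matrix ι ι R)) :
    (L.map fun M => s • M).prod = s ^ L.length • L.prod := by
  induction L with
  | nil => simp
  | cons e L ih =>
      simp only [List.map_cons, List.prod_cons, ih, List.length_cons]
      rw [smul_mul_assoc, mul_smul_comm, smul_smul, pow_succ, mul_comm]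



def blockOfR {R : Type*} (ns : Fin k → ℕ) (P : Matrix (SIdx k ns) (SIdx k ns) R)
    (i j : Fin k) : Matrix (Fin (ns i)) (Fin (ns j)) R :=
  fun a b => P ⟨i, a⟩ ⟨j, b⟩

def embedBlockR {R : Type*} [Zero R] (ns : Fin k → ℕ) (i j : Fin k)
    (M : Matrix (Fin (ns i)) (Fin (ns j)) R) : Matrix (SIdx k ns) (SIdx k ns) R :=
  fun a b =>
    if h : a.1 = i ∧ b.1 = j then
      M (Fin.cast (congrArg ns h.1) a.2) (Fin.cast (congrArg ns h.2) b.2)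
    else 0

def BD {R : Type*} [Zero R] (a : Matrix (SIdx k ns) (SIdx k ns) R) : Prop :=
  ∀ p q : SIdx k ns, p.1 ≠ q.1 → a p q = 0

lemma sum_sigma_univ {R : Type*} [AddCommMonoid R] (f : SIdx k ns → R) :
    ∑ q : SIdx k ns, f q = ∑ u : Fin k, ∑ w : Fin (ns u), f ⟨u, w⟩ := by
  rw [← Finset.univ_sigma_univ, Finset.sum_sigma]

lemma fin_cast_id {n : ℕ} (h : n = n) (w : Fin n) : Fin.cast h w = w := Fin.ext rfl

lemma sigma_cast {u i : Fin k} (h : u = i) (w : Fin (ns u)) :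
    (⟨u, w⟩ : SIdx k ns) = ⟨i, Fin.cast (congrArg ns h) w⟩ := by
  subst h; rfl

lemma mul_embedBlockR {R : Type*} [CommRing R] (a : Matrix (SIdx k ns) (SIdx k ns) R)
    (ha : BD a) (i j : Fin k) (M : Matrix (Fin (ns i)) (Fin (ns j)) R) :
    a * embedBlockR ns i j M = embedBlockR ns i j (blockOfR ns a i i * M) := by
  ext r s
  obtain ⟨ru, rv⟩ := r
  obtain ⟨su, sv⟩ := s
  rw [Matrix.mul_apply, sum_sigma_univ]
  by_cases hs : su = j
  · subst hs
    by_cases hr : ru = i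
    · subst hr
      rw [Finset.sum_eq_single ru]
      · show _ = embedBlockR ns ru su _ _ _
        unfold embedBlockR
        rw [dif_pos ⟨rfl, rfl⟩]
        show _ = (blockOfR ns a ru ru * M) _ _
        rw [Matrix.mul_apply]
        apply Finset.sum_congr rfl
        intro w _
        rw [dif_pos ⟨rfl, rfl⟩]
        rfl
      · intro u _ hu
        apply Finset.sum_eq_zero
        intro w _
        unfold embedBlockR
        rw [dif_neg (fun h => hu h.1), mul_zero]
      · intro h; exact absurd (Finset.mem_univ ru) h
    · have h0 : ∀ u : Fin k, ∑ w : Fin (ns u),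
          a ⟨ru, rv⟩ ⟨u, w⟩ * embedBlockR ns i su M ⟨u, w⟩ ⟨su, sv⟩ = 0 := by
        intro u
        apply Finset.sum_eq_zero
        intro w _
        by_cases hu : u = i
        · rw [ha ⟨ru, rv⟩ ⟨u, w⟩ (by simpa [hu] using hr), zero_mul]
        · unfold embedBlockR
          rw [dif_neg (fun h => hu h.1), mul_zero]
      rw [Finset.sum_congr rfl (fun u _ => h0 u), Finset.sum_const_zero]
      unfold embedBlockR
      rw [dif_neg (fun h => hr h.1)]
  · have h0 : ∀ u : Fin k, ∑ w : Fin (ns u),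
        a ⟨ru, rv⟩ ⟨u, w⟩ * embedBlockR ns i j M ⟨u, w⟩ ⟨su, sv⟩ = 0 := by
      intro u
      apply Finset.sum_eq_zero
      intro w _
      unfold embedBlockR
      rw [dif_neg (fun h => hs h.2), mul_zero]
    rw [Finset.sum_congr rfl (fun u _ => h0 u), Finset.sum_const_zero]
    unfold embedBlockR
    rw [dif_neg (fun h => hs h.2)]

lemma embedBlockR_mul {R : Type*} [CommRing R] (b : Matrix (SIdx k ns) (SIdx k ns) R)
    (hb : BD b) (i j : Fin k) (M : Matrix (Fin (ns i)) (Fin (ns j)) R) :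
    embedBlockR ns i j M * b = embedBlockR ns i j (M * blockOfR ns b j j) := by
  ext r s
  obtain ⟨ru, rv⟩ := r
  obtain ⟨su, sv⟩ := s
  rw [Matrix.mul_apply, sum_sigma_univ]
  by_cases hr : ru = i
  · subst hr
    by_cases hs : su = j
    · subst hs
      rw [Finset.sum_eq_single su]
      · show _ = embedBlockR ns ru su _ _ _
        unfold embedBlockR
        rw [dif_pos ⟨rfl, rfl⟩]
        show _ = (M * blockOfR ns b su su) _ _
        rw [Matrix.mul_apply]
        apply Finset.sum_congr rfl
        intro w _
        rw [dif_pos ⟨rfl, rfl⟩]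
        rfl
      · intro u _ hu
        apply Finset.sum_eq_zero
        intro w _
        unfold embedBlockR
        rw [dif_neg (fun h => hu h.2), zero_mul]
      · intro h; exact absurd (Finset.mem_univ su) h
    · have h0 : ∀ u : Fin k, ∑ w : Fin (ns u),
          embedBlockR ns ru j M ⟨ru, rv⟩ ⟨u, w⟩ * b ⟨u, w⟩ ⟨su, sv⟩ = 0 := by
        intro u
        apply Finset.sum_eq_zero
        intro w _
        by_cases hu : u = j
        · rw [hb ⟨u, w⟩ ⟨su, sv⟩ (by simp [hu]; exact fun h => hs h.symm), mul_zero]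
        · unfold embedBlockR
          rw [dif_neg (fun h => hu h.2), zero_mul]
      rw [Finset.sum_congr rfl (fun u _ => h0 u), Finset.sum_const_zero]
      unfold embedBlockR
      rw [dif_neg (fun h => hs h.2)]
  · have h0 : ∀ u : Fin k, ∑ w : Fin (ns u),
        embedBlockR ns i j M ⟨ru, rv⟩ ⟨u, w⟩ * b ⟨u, w⟩ ⟨su, sv⟩ = 0 := by
      intro u
      apply Finset.sum_eq_zero
      intro w _
      unfold embedBlockR
      rw [dif_neg (fun h => hr h.1), zero_mul]
    rw [Finset.sum_congr rfl (fun u _ => h0 u), Finset.sum_const_zero]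
    unfold embedBlockR
    rw [dif_neg (fun h => hr h.1)]



/-- the chain product of embedded blocks along the loop -/
def chainR {R : Type*} [CommRing R] (ns : Fin k → ℕ) (l : ℕ) (c : Fin (l+1) → Fin k)
    (P Ps : Matrix (SIdx k ns) (SIdx k ns) R) : Matrix (SIdx k ns) (SIdx k ns) R :=
  (List.ofFn fun t : Fin l => embedBlockR ns (c t.castSucc) (c t.succ)
    (if c t.castSucc < c t.succ then blockOfR ns P (c t.castSucc) (c t.succ)
     else blockOfR ns Ps (c t.castSucc) (c t.succ))).prod

lemma blockOfR_map' {R S : Type*} (f : R → S) (P : Matrix (SIdx k ns) (SIdx k ns) R)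
    (i j : Fin k) : (blockOfR ns P i j).map f = blockOfR ns (P.map f) i j := rfl

lemma embedBlockR_map {R S : Type*} [Zero R] [Zero S] (f : R → S) (h0 : f 0 = 0)
    (i j : Fin k) (M : Matrix (Fin (ns i)) (Fin (ns j)) R) :
    (embedBlockR ns i j M).map f = embedBlockR ns i j (M.map f) := by
  ext a b
  simp only [Matrix.map_apply, embedBlockR]
  split_ifs <;> simp [h0, Matrix.map_apply]

lemma chainR_map {R S : Type*} [CommRing R] [CommRing S] (f : R →+* S)
    (l : ℕ) (c : Fin (l+1) → Fin k) (P Ps : Matrix (SIdx k ns) (SIdx k ns) R) :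
    (chainR ns l c P Ps).map f = chainR ns l c (P.map f) (Ps.map f) := by
  unfold chainR
  rw [prod_map, List.map_ofFn]
  apply congrArg List.prod
  apply congrArg List.ofFn
  funext t
  show (embedBlockR ns _ _ _).map f = _
  rw [embedBlockR_map f (map_zero f), apply_ite (Matrix.map · f), blockOfR_map',
    blockOfR_map']


lemma blockOfR_mul_left {R : Type*} [CommRing R] (a M : Matrix (SIdx k ns) (SIdx k ns) R)
    (ha : BD a) (i j : Fin k) :
    blockOfR ns (a * M) i j = blockOfR ns a i i * blockOfR ns M i j := by
  ext r s
  show (a * M) ⟨i, r⟩ ⟨j, s⟩ = _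
  rw [Matrix.mul_apply, sum_sigma_univ (fun q => a ⟨i, r⟩ q * M q ⟨j, s⟩)]
  rw [Finset.sum_eq_single i]
  · rfl
  · intro u _ hu
    apply Finset.sum_eq_zero
    intro w _
    rw [ha ⟨i, r⟩ ⟨u, w⟩ (Ne.symm hu), zero_mul]
  · intro h
    exact absurd (Finset.mem_univ i) h

lemma blockOfR_mul_right {R : Type*} [CommRing R] (M b : Matrix (SIdx k ns) (SIdx k ns) R)
    (hb : BD b) (i j : Fin k) :
    blockOfR ns (M * b) i j = blockOfR ns M i j * blockOfR ns b j j := by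
  ext r s
  show (M * b) ⟨i, r⟩ ⟨j, s⟩ = _
  rw [Matrix.mul_apply, sum_sigma_univ (fun q => M ⟨i, r⟩ q * b q ⟨j, s⟩)]
  rw [Finset.sum_eq_single j]
  · rfl
  · intro u _ hu
    apply Finset.sum_eq_zero
    intro w _
    rw [hb ⟨u, w⟩ ⟨j, s⟩ hu, mul_zero]
  · intro h
    exact absurd (Finset.mem_univ j) h

lemma blockOfR_eqc (P : Matrix (SIdx k ns) (SIdx k ns) ℂ) (i j : Fin k) :
    blockOf ns P i j = blockOfR ns P i j := rfl

lemma embedBlockR_eqc (i j : Fin k) (M : Matrix (Fin (ns i)) (Fin (ns j)) ℂ) :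
    embedBlock ns i j M = embedBlockR ns i j M := rfl

lemma tildeBlock_eq (P : Matrix (SIdx k ns) (SIdx k ns) ℂ) (i j : Fin k) :
    tildeBlock ns P i j = if i < j then blockOfR ns P i j else blockOfR ns Pᴴ i j := by
  unfold tildeBlock
  split_ifs with h
  · rfl
  · ext a b
    simp [blockOf, blockOfR, Matrix.conjTranspose_apply]

lemma embedBlockR_smul {R : Type*} [CommRing R] (s : R)
    (i j : Fin k) (M : Matrix (Fin (ns i)) (Fin (ns j)) R) :
    embedBlockR ns i j (s • M) = s • embedBlockR ns i j M := by
  ext a b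
  simp only [Matrix.smul_apply, embedBlockR]
  split_ifs <;> simp

lemma blockOfR_smul {R : Type*} [CommRing R] (s : R) (P : Matrix (SIdx k ns) (SIdx k ns) R)
    (i j : Fin k) : blockOfR ns (s • P) i j = s • blockOfR ns P i j := rfl

lemma blockOfR_one {R : Type*} [CommRing R] (i : Fin k) :
    blockOfR ns (1 : Matrix (SIdx k ns) (SIdx k ns) R) i i = 1 := by
  ext a b
  by_cases h : a = b
  · subst h
    show (1 : Matrix (SIdx k ns) (SIdx k ns) R) ⟨i,a⟩ ⟨i,a⟩ = _
    rw [Matrix.one_apply_eq, Matrix.one_apply_eq]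
  · have h2 : (⟨i, a⟩ : SIdx k ns) ≠ ⟨i, b⟩ := by
      intro hc
      exact h (by simpa using (Sigma.mk.inj_iff.mp hc).2)
    show (1 : Matrix (SIdx k ns) (SIdx k ns) R) ⟨i,a⟩ ⟨i,b⟩ = _
    rw [Matrix.one_apply_ne h2, Matrix.one_apply_ne h]

lemma blockOfR_star (a : Matrix (SIdx k ns) (SIdx k ns) ℂ) (i j : Fin k) :
    blockOfR ns (star a) i j = (blockOfR ns a j i)ᴴ := by
  ext r s
  simp [blockOfR, Matrix.star_apply, Matrix.conjTranspose_apply]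

lemma BD_star (a : Matrix (SIdx k ns) (SIdx k ns) ℂ) (ha : BD a) : BD (star a) := by
  intro p q h
  show star (a q p) = 0
  rw [ha q p (Ne.symm h), star_zero]

lemma chainR_conj {R : Type*} [CommRing R] (l : ℕ) (c : Fin (l+1) → Fin k)
    (a b P Ps : Matrix (SIdx k ns) (SIdx k ns) R) (ha : BD a) (hb : BD b)
    (hab : a * b = 1) (hba : b * a = 1) :
    chainR ns l c (a * P * b) (a * Ps * b) = a * chainR ns l c P Ps * b := by
  unfold chainR
  rw [← prod_conj a b hab hba, List.map_ofFn]
  apply congrArg List.prod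
  apply congrArg List.ofFn
  funext t
  show embedBlockR ns _ _ _ = a * embedBlockR ns _ _ _ * b
  rw [mul_embedBlockR a ha, embedBlockR_mul b hb]
  apply congrArg
  split_ifs with h
  · show blockOfR ns (a * P * b) _ _ = _
    rw [blockOfR_mul_right _ b hb, blockOfR_mul_left _ _ ha]
  · show blockOfR ns (a * Ps * b) _ _ = _
    rw [blockOfR_mul_right _ b hb, blockOfR_mul_left _ _ ha]

lemma chainR_smul {R : Type*} [CommRing R] (l : ℕ) (c : Fin (l+1) → Fin k)
    (s : R) (P Ps : Matrix (SIdx k ns) (SIdx k ns) R) :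
    chainR ns l c (s • P) (s • Ps) = s ^ l • chainR ns l c P Ps := by
  unfold chainR
  have hmain : (List.ofFn fun t : Fin l => embedBlockR ns (c t.castSucc) (c t.succ)
      (if c t.castSucc < c t.succ then blockOfR ns (s • P) (c t.castSucc) (c t.succ)
       else blockOfR ns (s • Ps) (c t.castSucc) (c t.succ)))
      = (List.ofFn fun t : Fin l => embedBlockR ns (c t.castSucc) (c t.succ)
      (if c t.castSucc < c t.succ then blockOfR ns P (c t.castSucc) (c t.succ)
       else blockOfR ns Ps (c t.castSucc) (c t.succ))).map (fun M => s • M) := by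
    rw [List.map_ofFn]
    apply congrArg List.ofFn
    funext t
    show embedBlockR ns _ _ _ = s • embedBlockR ns _ _ _
    rw [← embedBlockR_smul]
    apply congrArg
    split_ifs with h
    · exact blockOfR_smul s P _ _
    · exact blockOfR_smul s Ps _ _
  rw [hmain, prod_smul, List.length_ofFn]

lemma loopA_chain (P : Matrix (SIdx k ns) (SIdx k ns) ℂ) (l : ℕ) (c : Fin (l+1) → Fin k) :
    loopA ns P l c = blockOfR ns (chainR ns l c P Pᴴ) (c 0) (c (Fin.last l)) := by
  unfold loopA chainR
  rw [blockOfR_eqc]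
  apply congrArg (fun M => blockOfR ns M (c 0) (c (Fin.last l)))
  apply congrArg List.prod
  apply congrArg List.ofFn
  funext t
  rw [embedBlockR_eqc]
  apply congrArg
  exact tildeBlock_eq P _ _

lemma blockOfR_cast {R : Type*} (M : Matrix (SIdx k ns) (SIdx k ns) R) {i j : Fin k}
    (h : j = i) :
    (blockOfR ns M i j).submatrix id (Fin.cast (congrArg ns h.symm)) = blockOfR ns M i i := by
  subst h
  rfl

lemma chainR_X_factor {R : Type*} [CommRing R] (l : ℕ) (c : Fin (l+1) → Fin k)
    (P Ps : Matrix (SIdx k ns) (SIdx k ns) R[X])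
    (h0 : ∀ t : Fin l, ∀ (a : Fin (ns (c t.castSucc))) (b : Fin (ns (c t.succ))),
      (((if c t.castSucc < c t.succ then blockOfR ns P (c t.castSucc) (c t.succ)
        else blockOfR ns Ps (c t.castSucc) (c t.succ))) a b).coeff 0 = 0) :
    chainR ns l c P Ps
      = (X : R[X]) ^ l • chainR ns l c (P.map divX) (Ps.map divX) := by
  unfold chainR
  have hmain : (List.ofFn fun t : Fin l => embedBlockR ns (c t.castSucc) (c t.succ)
      (if c t.castSucc < c t.succ then blockOfR ns P (c t.castSucc) (c t.succ)
       else blockOfR ns Ps (c t.castSucc) (c t.succ)))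
      = (List.ofFn fun t : Fin l => embedBlockR ns (c t.castSucc) (c t.succ)
      (if c t.castSucc < c t.succ then blockOfR ns (P.map divX) (c t.castSucc) (c t.succ)
       else blockOfR ns (Ps.map divX) (c t.castSucc) (c t.succ))).map
         (fun M => (X : R[X]) • M) := by
    rw [List.map_ofFn]
    apply congrArg List.ofFn
    funext t
    show embedBlockR ns _ _ _ = X • embedBlockR ns _ _ _
    rw [← embedBlockR_smul]
    apply congrArg
    have hsplit : (if c t.castSucc < c t.succ
          then blockOfR ns (P.map divX) (c t.castSucc) (c t.succ)
          else blockOfR ns (Ps.map divX) (c t.castSucc) (c t.succ))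
        = (if c t.castSucc < c t.succ then blockOfR ns P (c t.castSucc) (c t.succ)
          else blockOfR ns Ps (c t.castSucc) (c t.succ)).map divX := by
      split_ifs with h <;> rfl
    rw [hsplit]
    ext a b : 1
    show _ = ((X : R[X]) • ((if c t.castSucc < c t.succ
        then blockOfR ns P (c t.castSucc) (c t.succ)
        else blockOfR ns Ps (c t.castSucc) (c t.succ)).map divX)) a b
    rw [Matrix.smul_apply, Matrix.map_apply, smul_eq_mul]
    conv_lhs => rw [← Polynomial.X_mul_divX_add ((if c t.castSucc < c t.succ
        then blockOfR ns P (c t.castSucc) (c t.succ)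
        else blockOfR ns Ps (c t.castSucc) (c t.succ)) a b)]
    rw [h0 t a b, map_zero, add_zero]
  rw [hmain, prod_smul, List.length_ofFn]

section PhiSec

variable {ιx : Type*} [Fintype ιx] [DecidableEq ιx] {R : Type*} [CommRing R]

/-- coefficient matrix -/
def cm (n : ℕ) (M : Matrix ιx ιx R[X]) : Matrix ιx ιx R :=
  M.map (fun p => p.coeff n)

lemma cm_add (n : ℕ) (A B : Matrix ιx ιx R[X]) : cm n (A + B) = cm n A + cm n B := by
  ext a b; simp [cm]

lemma cm_sub (n : ℕ) (A B : Matrix ιx ιx R[X]) : cm n (A - B) = cm n A - cm n B := by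
  ext a b; simp [cm]

lemma cm_zero_eq (M : Matrix ιx ιx R[X]) :
    cm 0 M = M.map (constantCoeff : R[X] →+* R) := rfl

lemma cm0_mul (A B : Matrix ιx ιx R[X]) : cm 0 (A * B) = cm 0 A * cm 0 B := by
  rw [cm_zero_eq, cm_zero_eq, cm_zero_eq, Matrix.map_mul]

lemma cm0_X_smul (A : Matrix ιx ιx R[X]) : cm 0 ((X : R[X]) • A) = 0 := by
  ext a b
  show ((X : R[X]) * A a b).coeff 0 = 0
  rw [mul_coeff_zero, coeff_X_zero, zero_mul]

lemma cm1_X_smul (A : Matrix ιx ιx R[X]) : cm 1 ((X : R[X]) • A) = cm 0 A := by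
  ext a b
  show ((X : R[X]) * A a b).coeff 1 = (A a b).coeff 0
  rw [Polynomial.coeff_X_mul]

lemma cm0_X2_smul (A : Matrix ιx ιx R[X]) : cm 0 ((X : R[X]) ^ 2 • A) = 0 := by
  rw [pow_two, ← smul_smul, cm0_X_smul]

lemma cm1_X2_smul (A : Matrix ιx ιx R[X]) : cm 1 ((X : R[X]) ^ 2 • A) = 0 := by
  rw [pow_two, ← smul_smul, cm1_X_smul, cm0_X_smul]

lemma cm0_mapC (A : Matrix ιx ιx R) : cm 0 (A.map C) = A := by
  ext a b; simp [cm]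

lemma cm1_mapC (A : Matrix ιx ιx R) : cm 1 (A.map C) = 0 := by
  ext a b; simp [cm, Polynomial.coeff_C]

lemma poly_coeff_one_mul (p q : R[X]) :
    (p * q).coeff 1 = p.coeff 0 * q.coeff 1 + p.coeff 1 * q.coeff 0 := by
  rw [Polynomial.coeff_mul, Finset.Nat.sum_antidiagonal_eq_sum_range_succ_mk,
    Finset.sum_range_succ, Finset.sum_range_one]

lemma cm0_psmul (e : R[X]) (A : Matrix ιx ιx R[X]) :
    cm 0 (e • A) = e.coeff 0 • cm 0 A := by
  ext a b
  show (e * A a b).coeff 0 = e.coeff 0 * (A a b).coeff 0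
  rw [mul_coeff_zero]

lemma cm1_psmul (e : R[X]) (A : Matrix ιx ιx R[X]) :
    cm 1 (e • A) = e.coeff 0 • cm 1 A + e.coeff 1 • cm 0 A := by
  ext a b
  show (e * A a b).coeff 1 = _
  rw [poly_coeff_one_mul]
  rfl

/-- the Cayley-type polynomial matrices -/
noncomputable def Mm (Xm : Matrix ιx ιx R) : Matrix ιx ιx R[X] := 1 - (X : R[X]) • Xm.map C

noncomputable def Mp (Xm : Matrix ιx ιx R) : Matrix ιx ιx R[X] := 1 + (X : R[X]) • Xm.map C

noncomputable def Phi (G Xm : Matrix ιx ιx R) : Matrix ιx ιx R[X] :=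
  Mp Xm * adjugate (Mm Xm) * G.map C * adjugate (Mp Xm) * Mm Xm

lemma Mm_mul_Mp_comm (Xm : Matrix ιx ιx R) : Mm Xm * Mp Xm = Mp Xm * Mm Xm := by
  unfold Mm Mp
  set A := (X : R[X]) • Xm.map C with hA
  have h1 : (1 - A) * (1 + A) = 1 - A * A := by
    rw [sub_mul, mul_add, mul_add, one_mul, one_mul, mul_one]
    abel
  have h2 : (1 + A) * (1 - A) = 1 - A * A := by
    rw [add_mul, mul_sub, mul_sub, one_mul, mul_one, one_mul]
    abel
  rw [h1, h2]

lemma star_identity (G Xm : Matrix ιx ιx R) :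
    Mm Xm * Phi G Xm * Mp Xm
      = ((Mm Xm).det * (Mp Xm).det) • (Mp Xm * G.map C * Mm Xm) := by
  unfold Phi
  simp only [Matrix.mul_assoc]
  rw [Mm_mul_Mp_comm]
  rw [← Matrix.mul_assoc (adjugate (Mp Xm)) (Mp Xm) (Mm Xm), Matrix.adjugate_mul,
     Matrix.smul_mul, Matrix.one_mul]
  simp only [Matrix.mul_smul]
  rw [← Matrix.mul_assoc (Mm Xm) (Mp Xm), Mm_mul_Mp_comm, Matrix.mul_assoc (Mp Xm) (Mm Xm),
     ← Matrix.mul_assoc (Mm Xm) (adjugate (Mm Xm)), Matrix.mul_adjugate,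
     Matrix.smul_mul, Matrix.one_mul, Matrix.mul_smul]
  rw [smul_smul, mul_comm ((Mp Xm).det)]

lemma cm0_one : cm 0 (1 : Matrix ιx ιx R[X]) = 1 := by
  ext a b
  by_cases h : a = b
  · subst h
    show ((1 : Matrix ιx ιx R[X]) a a).coeff 0 = _
    rw [Matrix.one_apply_eq, Matrix.one_apply_eq, Polynomial.coeff_one_zero]
  · show ((1 : Matrix ιx ιx R[X]) a b).coeff 0 = _
    rw [Matrix.one_apply_ne h, Matrix.one_apply_ne h, Polynomial.coeff_zero]

lemma expand_MmMp (Xm Φy : Matrix ιx ιx R[X]) :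
    (1 - (X : R[X]) • Xm) * Φy * (1 + (X : R[X]) • Xm)
      = Φy + (X : R[X]) • (Φy * Xm) - (X : R[X]) • (Xm * Φy)
        - ((X : R[X]) ^ 2) • (Xm * Φy * Xm) := by
  rw [sub_mul, one_mul, Matrix.smul_mul, sub_mul, mul_add, mul_add, mul_one, mul_one,
    Matrix.mul_smul, Matrix.smul_mul, Matrix.mul_smul, smul_smul, ← pow_two]
  abel

lemma expand_MpMm (Xm Φy : Matrix ιx ιx R[X]) :
    (1 + (X : R[X]) • Xm) * Φy * (1 - (X : R[X]) • Xm)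
      = Φy + (X : R[X]) • (Xm * Φy) - (X : R[X]) • (Φy * Xm)
        - ((X : R[X]) ^ 2) • (Xm * Φy * Xm) := by
  rw [add_mul, one_mul, Matrix.smul_mul, add_mul, mul_sub, mul_sub, mul_one, mul_one,
    Matrix.mul_smul, Matrix.smul_mul, Matrix.mul_smul, smul_smul, ← pow_two]
  abel

lemma det_coeff_zero_Mm (Xm : Matrix ιx ιx R) : ((Mm Xm).det).coeff 0 = 1 := by
  have h : ((Mm Xm).det).coeff 0 = constantCoeff ((Mm Xm).det) := rfl
  rw [h, RingHom.map_det]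
  have h2 : (constantCoeff : R[X] →+* R).mapMatrix (Mm Xm) = 1 := by
    have : (constantCoeff : R[X] →+* R).mapMatrix (Mm Xm) = cm 0 (Mm Xm) := rfl
    rw [this]
    unfold Mm
    rw [cm_sub, cm0_one, cm0_X_smul, sub_zero]
  rw [h2, Matrix.det_one]

lemma det_coeff_zero_Mp (Xm : Matrix ιx ιx R) : ((Mp Xm).det).coeff 0 = 1 := by
  have h : ((Mp Xm).det).coeff 0 = constantCoeff ((Mp Xm).det) := rfl
  rw [h, RingHom.map_det]
  have h2 : (constantCoeff : R[X] →+* R).mapMatrix (Mp Xm) = 1 := by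
    have : (constantCoeff : R[X] →+* R).mapMatrix (Mp Xm) = cm 0 (Mp Xm) := rfl
    rw [this]
    unfold Mp
    rw [cm_add, cm0_one, cm0_X_smul, add_zero]
  rw [h2, Matrix.det_one]

lemma cm0_N (G Xm : Matrix ιx ιx R) : cm 0 (Mp Xm * G.map C * Mm Xm) = G := by
  unfold Mm Mp
  rw [expand_MpMm, cm_sub, cm_sub, cm_add, cm0_X_smul, cm0_X_smul, cm0_X2_smul,
    cm0_mapC, add_zero, sub_zero, sub_zero]

lemma cm1_N (G Xm : Matrix ιx ιx R) :
    cm 1 (Mp Xm * G.map C * Mm Xm) = Xm * G - G * Xm := by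
  unfold Mm Mp
  rw [expand_MpMm, cm_sub, cm_sub, cm_add, cm1_X_smul, cm1_X_smul, cm1_X2_smul,
    cm1_mapC, cm0_mul, cm0_mul, cm0_mapC, cm0_mapC, sub_zero, zero_add]

lemma cm0_Phi (G Xm : Matrix ιx ιx R) : cm 0 (Phi G Xm) = G := by
  have hs := star_identity G Xm
  have hL : cm 0 (Mm Xm * Phi G Xm * Mp Xm) = cm 0 (Phi G Xm) := by
    unfold Mm Mp
    rw [expand_MmMp, cm_sub, cm_sub, cm_add, cm0_X_smul, cm0_X_smul, cm0_X2_smul,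
      add_zero, sub_zero, sub_zero]
  have hR : cm 0 (((Mm Xm).det * (Mp Xm).det) • (Mp Xm * G.map C * Mm Xm)) = G := by
    rw [cm0_psmul, cm0_N, mul_coeff_zero, det_coeff_zero_Mm, det_coeff_zero_Mp, one_mul,
      one_smul]
  rw [← hL, hs, hR]

lemma cm1_Phi (G Xm : Matrix ιx ιx R) :
    cm 1 (Phi G Xm) = (Xm * G - G * Xm) + (Xm * G - G * Xm)
      + (((Mm Xm).det * (Mp Xm).det).coeff 1) • G := by
  have hs := star_identity G Xm
  have hL : cm 1 (Mm Xm * Phi G Xm * Mp Xm)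
      = cm 1 (Phi G Xm) + (G * Xm - Xm * G) := by
    unfold Mm Mp
    rw [expand_MmMp, cm_sub, cm_sub, cm_add, cm1_X_smul, cm1_X_smul, cm1_X2_smul,
      cm0_mul, cm0_mul]
    have h0 : cm 0 (Phi G Xm) = G := cm0_Phi G Xm
    have hxc : cm 0 (Xm.map C) = Xm := cm0_mapC Xm
    rw [h0, hxc, sub_zero]
    abel
  have hR : cm 1 (((Mm Xm).det * (Mp Xm).det) • (Mp Xm * G.map C * Mm Xm))
      = (Xm * G - G * Xm) + (((Mm Xm).det * (Mp Xm).det).coeff 1) • G := by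
    rw [cm1_psmul, cm1_N, cm0_N, mul_coeff_zero, det_coeff_zero_Mm, det_coeff_zero_Mp,
      one_mul, one_smul]
  rw [hs, hR] at hL
  have := hL
  calc cm 1 (Phi G Xm)
      = (cm 1 (Phi G Xm) + (G * Xm - Xm * G)) + (Xm * G - G * Xm) + (Xm * G - G * Xm)
        - (Xm * G - G * Xm) - (Xm * G - G * Xm) + (Xm * G - G * Xm) := by abel
    _ = _ := by rw [← this]; abel

lemma GC_eval (G : Matrix ιx ιx R) (t : R) : (G.map C).map (evalRingHom t) = G := by
  ext a b
  simp [Matrix.map_apply]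

lemma Mm_eval (Xm : Matrix ιx ιx R) (t : R) :
    (Mm Xm).map (evalRingHom t) = 1 - t • Xm := by
  ext a b
  simp only [Mm, Matrix.map_apply, Matrix.sub_apply, Matrix.smul_apply, Matrix.map_apply,
    coe_evalRingHom, smul_eq_mul]
  rw [eval_sub]
  congr 1
  · by_cases h : a = b
    · subst h; rw [Matrix.one_apply_eq, Matrix.one_apply_eq]; simp
    · rw [Matrix.one_apply_ne h, Matrix.one_apply_ne h]; simp
  · rw [eval_mul, eval_X, eval_C, mul_comm]

lemma Mp_eval (Xm : Matrix ιx ιx R) (t : R) :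
    (Mp Xm).map (evalRingHom t) = 1 + t • Xm := by
  ext a b
  simp only [Mp, Matrix.map_apply, Matrix.add_apply, Matrix.smul_apply, Matrix.map_apply,
    coe_evalRingHom, smul_eq_mul]
  rw [eval_add]
  congr 1
  · by_cases h : a = b
    · subst h; rw [Matrix.one_apply_eq, Matrix.one_apply_eq]; simp
    · rw [Matrix.one_apply_ne h, Matrix.one_apply_ne h]; simp
  · rw [eval_mul, eval_X, eval_C, mul_comm]

lemma Phi_eval (G Xm : Matrix ιx ιx R) (t : R) :
    (Phi G Xm).map (evalRingHom t)
      = (1 + t • Xm) * adjugate (1 - t • Xm) * G * adjugate (1 + t • Xm) * (1 - t • Xm) := by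
  unfold Phi
  rw [Matrix.map_mul, Matrix.map_mul, Matrix.map_mul, Matrix.map_mul]
  have ha1 : (adjugate (Mm Xm)).map (evalRingHom t) = adjugate (1 - t • Xm) := by
    have := (evalRingHom t).map_adjugate (Mm Xm)
    rw [RingHom.mapMatrix_apply, RingHom.mapMatrix_apply] at this
    rw [this, Mm_eval]
  have ha2 : (adjugate (Mp Xm)).map (evalRingHom t) = adjugate (1 + t • Xm) := by
    have := (evalRingHom t).map_adjugate (Mp Xm)
    rw [RingHom.mapMatrix_apply, RingHom.mapMatrix_apply] at this
    rw [this, Mp_eval]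
  rw [ha1, ha2, Mm_eval, Mp_eval, GC_eval]

end PhiSec

section CayleySec

variable {ιx : Type*} [Fintype ιx] [DecidableEq ιx]

lemma adjugate_eq_det_smul_inv (A : Matrix ιx ιx ℂ) (h : A.det ≠ 0) :
    adjugate A = A.det • A⁻¹ := by
  rw [Matrix.inv_def, smul_smul, Ring.inverse_eq_inv, mul_inv_cancel₀ h, one_smul]

lemma one_sub_mul_one_add_comm (A : Matrix ιx ιx ℂ) :
    (1 - A) * (1 + A) = (1 + A) * (1 - A) := by
  have h1 : (1 - A) * (1 + A) = 1 - A * A := by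
    rw [sub_mul, mul_add, mul_add, one_mul, one_mul, mul_one]
    abel
  have h2 : (1 + A) * (1 - A) = 1 - A * A := by
    rw [add_mul, mul_sub, mul_sub, one_mul, mul_one, one_mul]
    abel
  rw [h1, h2]

lemma Am_ct (Xm : Matrix ιx ιx ℂ) (t : ℝ) (hX : Xmᴴ = -Xm) :
    (1 - (t:ℂ) • Xm)ᴴ = 1 + (t:ℂ) • Xm := by
  rw [conjTranspose_sub, conjTranspose_one, conjTranspose_smul, hX]
  rw [show star ((t:ℂ)) = (t:ℂ) from Complex.conj_ofReal t]
  rw [smul_neg, sub_neg_eq_add]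

lemma Ap_ct (Xm : Matrix ιx ιx ℂ) (t : ℝ) (hX : Xmᴴ = -Xm) :
    (1 + (t:ℂ) • Xm)ᴴ = 1 - (t:ℂ) • Xm := by
  conv_lhs => rw [← Am_ct Xm t hX]
  rw [conjTranspose_conjTranspose]

lemma det_Ap_ne (Xm : Matrix ιx ιx ℂ) (t : ℝ) (hX : Xmᴴ = -Xm)
    (hd : (1 - (t:ℂ) • Xm).det ≠ 0) : (1 + (t:ℂ) • Xm).det ≠ 0 := by
  rw [← Am_ct Xm t hX, Matrix.det_conjTranspose]
  simpa using hd

lemma cayley_star (Xm : Matrix ιx ιx ℂ) (t : ℝ) (hX : Xmᴴ = -Xm) :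
    star ((1 + (t:ℂ) • Xm) * (1 - (t:ℂ) • Xm)⁻¹)
      = (1 + (t:ℂ) • Xm)⁻¹ * (1 - (t:ℂ) • Xm) := by
  rw [Matrix.star_eq_conjTranspose, conjTranspose_mul, Matrix.conjTranspose_nonsing_inv,
    Am_ct Xm t hX, Ap_ct Xm t hX]

lemma cayley_mul_right (Xm : Matrix ιx ιx ℂ) (t : ℝ) (hX : Xmᴴ = -Xm)
    (hd : (1 - (t:ℂ) • Xm).det ≠ 0) :
    ((1 + (t:ℂ) • Xm) * (1 - (t:ℂ) • Xm)⁻¹) * ((1 + (t:ℂ) • Xm)⁻¹ * (1 - (t:ℂ) • Xm))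
      = 1 := by
  have hum : IsUnit (1 - (t:ℂ) • Xm).det := isUnit_iff_ne_zero.mpr hd
  have hup : IsUnit (1 + (t:ℂ) • Xm).det :=
    isUnit_iff_ne_zero.mpr (det_Ap_ne Xm t hX hd)
  have hcomm := one_sub_mul_one_add_comm ((t:ℂ) • Xm)
  calc (1 + (t:ℂ) • Xm) * (1 - (t:ℂ) • Xm)⁻¹ * ((1 + (t:ℂ) • Xm)⁻¹ * (1 - (t:ℂ) • Xm))
      = (1 + (t:ℂ) • Xm) * ((1 + (t:ℂ) • Xm) * (1 - (t:ℂ) • Xm))⁻¹ * (1 - (t:ℂ) • Xm) := by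
        rw [Matrix.mul_inv_rev]
        simp only [Matrix.mul_assoc]
    _ = (1 + (t:ℂ) • Xm) * ((1 - (t:ℂ) • Xm) * (1 + (t:ℂ) • Xm))⁻¹ * (1 - (t:ℂ) • Xm) := by
        rw [hcomm]
    _ = ((1 + (t:ℂ) • Xm) * (1 + (t:ℂ) • Xm)⁻¹) * ((1 - (t:ℂ) • Xm)⁻¹ * (1 - (t:ℂ) • Xm)) := by
        rw [Matrix.mul_inv_rev]
        simp only [Matrix.mul_assoc]
    _ = 1 := by rw [Matrix.mul_nonsing_inv _ hup, Matrix.nonsing_inv_mul _ hum, one_mul]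

lemma cayley_mul_left (Xm : Matrix ιx ιx ℂ) (t : ℝ) (hX : Xmᴴ = -Xm)
    (hd : (1 - (t:ℂ) • Xm).det ≠ 0) :
    ((1 + (t:ℂ) • Xm)⁻¹ * (1 - (t:ℂ) • Xm)) * ((1 + (t:ℂ) • Xm) * (1 - (t:ℂ) • Xm)⁻¹)
      = 1 := by
  have hum : IsUnit (1 - (t:ℂ) • Xm).det := isUnit_iff_ne_zero.mpr hd
  have hup : IsUnit (1 + (t:ℂ) • Xm).det :=
    isUnit_iff_ne_zero.mpr (det_Ap_ne Xm t hX hd)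
  have hcomm := one_sub_mul_one_add_comm ((t:ℂ) • Xm)
  calc (1 + (t:ℂ) • Xm)⁻¹ * (1 - (t:ℂ) • Xm) * ((1 + (t:ℂ) • Xm) * (1 - (t:ℂ) • Xm)⁻¹)
      = (1 + (t:ℂ) • Xm)⁻¹ * ((1 - (t:ℂ) • Xm) * (1 + (t:ℂ) • Xm)) * (1 - (t:ℂ) • Xm)⁻¹ := by
        simp only [Matrix.mul_assoc]
    _ = (1 + (t:ℂ) • Xm)⁻¹ * ((1 + (t:ℂ) • Xm) * (1 - (t:ℂ) • Xm)) * (1 - (t:ℂ) • Xm)⁻¹ := by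
        rw [hcomm]
    _ = ((1 + (t:ℂ) • Xm)⁻¹ * (1 + (t:ℂ) • Xm)) * ((1 - (t:ℂ) • Xm) * (1 - (t:ℂ) • Xm)⁻¹) := by
        simp only [Matrix.mul_assoc]
    _ = 1 := by rw [Matrix.nonsing_inv_mul _ hup, Matrix.mul_nonsing_inv _ hum, one_mul]

end CayleySec

lemma eval_real (J : Matrix (SIdx k ns) (SIdx k ns) ℂ)
    (hJreal : ∀ a b, (J a b).im = 0)
    (X : Matrix (SIdx k ns) (SIdx k ns) ℂ) (hX : Xᴴ = -X)
    (l : ℕ) (c : Fin (l+1) → Fin k)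
    (hdecomp : ∀ g ∈ Matrix.unitaryGroup (SIdx k ns) ℂ,
      ∃ a o h : Matrix (SIdx k ns) (SIdx k ns) ℂ,
        (a ∈ Matrix.unitaryGroup (SIdx k ns) ℂ ∧ BD a)
        ∧ (o ∈ Matrix.unitaryGroup (SIdx k ns) ℂ ∧ ∀ p q, (o p q).im = 0)
        ∧ (h ∈ Matrix.unitaryGroup (SIdx k ns) ℂ ∧ h * J = J * h)
        ∧ a * o * h = g)
    (m : ℕ) (t : ℝ)
    (hd : ((1 : Matrix (SIdx k ns) (SIdx k ns) ℂ) - (t:ℂ) • X).det ≠ 0) :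
    ((((blockOfR ns (chainR ns l c (Phi J X) (Phi Jᵀ X)) (c 0) (c 0)).charpoly.coeff m).eval
      (t:ℂ))).im = 0 := by
  classical
  set Am := (1 : Matrix (SIdx k ns) (SIdx k ns) ℂ) - (t:ℂ) • X with hAm
  set Ap := (1 : Matrix (SIdx k ns) (SIdx k ns) ℂ) + (t:ℂ) • X with hAp
  set g := Ap * Am⁻¹ with hg
  have hstarg : star g = Ap⁻¹ * Am := cayley_star X t hX
  have hgs : g * star g = 1 := by rw [hstarg]; exact cayley_mul_right X t hX hd
  have hsg : star g * g = 1 := by rw [hstarg]; exact cayley_mul_left X t hX hd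
  have hgU : g ∈ Matrix.unitaryGroup (SIdx k ns) ℂ := Matrix.mem_unitaryGroup_iff.mpr hgs
  obtain ⟨a, o, h, ⟨haU, haBD⟩, ⟨hoU, hoR⟩, ⟨hhU, hhJ⟩, hprod⟩ := hdecomp g hgU
  set d := Am.det with hdd
  have hdp : Ap.det = star d := by
    rw [hAp, hdd, hAm, ← Am_ct X t hX, Matrix.det_conjTranspose]
  set e := d * star d with he
  -- star of e
  have he_fix : (starRingEnd ℂ) e = e := by
    rw [he]
    show star (d * star d) = d * star d
    rw [star_mul', star_star]
    exact mul_comm _ _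
  set Q := o * J * star o with hQ
  -- realness of Q
  have hoC : o.map (starRingEnd ℂ) = o := by
    ext p q
    exact Complex.conj_eq_iff_im.mpr (hoR p q)
  have hJC : J.map (starRingEnd ℂ) = J := by
    ext p q
    exact Complex.conj_eq_iff_im.mpr (hJreal p q)
  have hoSC : (star o).map (starRingEnd ℂ) = star o := by
    ext p q
    show (starRingEnd ℂ) ((star o) p q) = (star o) p q
    rw [Matrix.star_eq_conjTranspose, Matrix.conjTranspose_apply]
    rw [show (star (o q p)) = (starRingEnd ℂ) (o q p) from rfl]
    rw [Complex.conj_eq_iff_im.mpr (hoR q p)]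
    exact Complex.conj_eq_iff_im.mpr (hoR q p)
  have hQC : Q.map (starRingEnd ℂ) = Q := by
    rw [hQ, Matrix.map_mul, Matrix.map_mul, hoC, hJC, hoSC]
  have hQH : (Qᴴ).map (starRingEnd ℂ) = Qᴴ := by
    ext p q
    show (starRingEnd ℂ) (Qᴴ p q) = Qᴴ p q
    rw [Matrix.conjTranspose_apply]
    have := congrFun (congrFun hQC q) p
    rw [Matrix.map_apply] at this
    rw [show (star (Q q p)) = (starRingEnd ℂ) (Q q p) from rfl, this]
    exact this
  -- h J star h = J
  have hhJs : h * J * star h = J := by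
    rw [hhJ, mul_assoc, Matrix.mem_unitaryGroup_iff.mp hhU, mul_one]
  -- g J star g = a Q star a
  have hkey : g * J * star g = a * Q * star a := by
    rw [← hprod, Matrix.star_mul, Matrix.star_mul]
    calc a * o * h * J * (star h * (star o * star a))
        = a * o * (h * J * star h) * (star o * star a) := by
          simp only [mul_assoc]
      _ = a * o * J * (star o * star a) := by rw [hhJs]
      _ = a * (o * J * star o) * star a := by simp only [mul_assoc]
  have hkeyT : g * Jᵀ * star g = a * Qᴴ * star a := by
    have hJH : Jᴴ = Jᵀ := by
      ext p q
      rw [Matrix.conjTranspose_apply, Matrix.transpose_apply]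
      exact Complex.conj_eq_iff_im.mpr (hJreal q p)
    have h1 : (g * J * star g)ᴴ = g * Jᵀ * star g := by
      rw [conjTranspose_mul, conjTranspose_mul, hJH]
      rw [← Matrix.star_eq_conjTranspose g, ← Matrix.star_eq_conjTranspose (star g), star_star]
      simp only [mul_assoc]
    have h2 : (a * Q * star a)ᴴ = a * Qᴴ * star a := by
      rw [conjTranspose_mul, conjTranspose_mul]
      rw [← Matrix.star_eq_conjTranspose a, ← Matrix.star_eq_conjTranspose (star a), star_star]
      simp only [mul_assoc]
    rw [← h1, hkey, h2]
  -- adjugates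
  have hadjm : adjugate Am = d • Am⁻¹ := adjugate_eq_det_smul_inv Am hd
  have hadjp : adjugate Ap = (star d) • Ap⁻¹ := by
    rw [adjugate_eq_det_smul_inv Ap (det_Ap_ne X t hX hd), hdp]
  -- Phi evaluations
  have hPhiGen : ∀ G : Matrix (SIdx k ns) (SIdx k ns) ℂ,
      (Phi G X).map (evalRingHom (t:ℂ)) = e • (g * G * star g) := by
    intro G
    rw [Phi_eval, ← hAm, ← hAp, hadjm, hadjp]
    simp only [Matrix.mul_smul, Matrix.smul_mul, smul_smul]
    rw [hstarg, hg]
    simp only [mul_assoc]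
    rw [he, mul_comm d (star d)]
  have hPhiT : (Phi J X).map (evalRingHom (t:ℂ)) = a * (e • Q) * star a := by
    rw [hPhiGen J, hkey, Matrix.mul_smul, Matrix.smul_mul]
  have hPhiST : (Phi Jᵀ X).map (evalRingHom (t:ℂ)) = a * (e • Qᴴ) * star a := by
    rw [hPhiGen Jᵀ, hkeyT, Matrix.mul_smul, Matrix.smul_mul]
  -- chain evaluation
  have haa : a * star a = 1 := Matrix.mem_unitaryGroup_iff.mp haU
  have haa' : star a * a = 1 := Matrix.mem_unitaryGroup_iff'.mp haU
  set Rm := chainR ns l c (e • Q) (e • Qᴴ) with hRm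
  have hchainEv : (chainR ns l c (Phi J X) (Phi Jᵀ X)).map (evalRingHom (t:ℂ))
      = a * Rm * star a := by
    rw [chainR_map, hPhiT, hPhiST, hRm]
    exact chainR_conj l c a (star a) (e • Q) (e • Qᴴ) haBD (BD_star a haBD) haa haa'
  -- realness of Rm
  have hsmulQ : (e • Q).map (starRingEnd ℂ) = e • Q := by
    ext p q
    show (starRingEnd ℂ) (e * Q p q) = e * Q p q
    rw [RingHom.map_mul, he_fix]
    have := congrFun (congrFun hQC q) q
    have h2 := congrFun (congrFun hQC p) q
    rw [Matrix.map_apply] at h2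
    rw [h2]
  have hsmulQH : (e • Qᴴ).map (starRingEnd ℂ) = e • Qᴴ := by
    ext p q
    show (starRingEnd ℂ) (e * Qᴴ p q) = e * Qᴴ p q
    rw [RingHom.map_mul, he_fix]
    have h2 := congrFun (congrFun hQH p) q
    rw [Matrix.map_apply] at h2
    rw [h2]
  have hRmFix : Rm.map (starRingEnd ℂ) = Rm := by
    rw [hRm, chainR_map, hsmulQ, hsmulQH]
  -- block extraction
  set V := blockOfR ns a (c 0) (c 0) with hV
  set Wm := blockOfR ns Rm (c 0) (c 0) with hWm
  have hblk : (blockOfR ns (chainR ns l c (Phi J X) (Phi Jᵀ X)) (c 0) (c 0)).map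
      (evalRingHom (t:ℂ)) = V * Wm * Vᴴ := by
    rw [blockOfR_map', hchainEv]
    rw [blockOfR_mul_right _ (star a) (BD_star a haBD), blockOfR_mul_left _ _ haBD]
    rw [blockOfR_star, hV, hWm]
  have hVV : V * Vᴴ = 1 := by
    rw [hV, ← blockOfR_star]
    rw [← blockOfR_mul_right _ (star a) (BD_star a haBD), haa, blockOfR_one]
  -- conclude
  have hcp : ((blockOfR ns (chainR ns l c (Phi J X) (Phi Jᵀ X)) (c 0) (c 0)).charpoly.coeff
      m).eval (t:ℂ) = (Wm.charpoly).coeff m := by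
    have h1 := Matrix.charpoly_map
      (blockOfR ns (chainR ns l c (Phi J X) (Phi Jᵀ X)) (c 0) (c 0)) (evalRingHom (t:ℂ))
    have h2 : (((blockOfR ns (chainR ns l c (Phi J X) (Phi Jᵀ X)) (c 0) (c 0)).charpoly.coeff
        m).eval (t:ℂ))
        = (((blockOfR ns (chainR ns l c (Phi J X) (Phi Jᵀ X)) (c 0) (c 0)).charpoly).map
          (evalRingHom (t:ℂ))).coeff m := by
      rw [Polynomial.coeff_map]
      rfl
    rw [h2, ← h1, hblk, charpoly_unitary_conj V Wm hVV]
  rw [hcp]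
  apply charpoly_coeff_real
  rw [hWm, blockOfR_map', hRmFix]

lemma blockOfR_add {R : Type*} [CommRing R] (P Q : Matrix (SIdx k ns) (SIdx k ns) R)
    (i j : Fin k) :
    blockOfR ns (P + Q) i j = blockOfR ns P i j + blockOfR ns Q i j := rfl

lemma chainR_congr {R : Type*} [CommRing R] (l : ℕ) (c : Fin (l+1) → Fin k)
    (P Ps P' Ps' : Matrix (SIdx k ns) (SIdx k ns) R)
    (hadj : ∀ t : Fin l, c t.castSucc ≠ c t.succ)
    (h : ∀ i j : Fin k, i ≠ j → blockOfR ns P i j = blockOfR ns P' i j)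
    (hs : ∀ i j : Fin k, i ≠ j → blockOfR ns Ps i j = blockOfR ns Ps' i j) :
    chainR ns l c P Ps = chainR ns l c P' Ps' := by
  unfold chainR
  apply congrArg List.prod
  apply congrArg List.ofFn
  funext t
  apply congrArg
  split_ifs with hlt
  · exact h _ _ (hadj t)
  · exact hs _ _ (hadj t)

lemma final (J : Matrix (SIdx k ns) (SIdx k ns) ℂ)
    (hJreal : ∀ a b, (J a b).im = 0)
    (hJblock : ∀ a b : SIdx k ns, a.1 ≠ b.1 → J a b = 0)
    (X : Matrix (SIdx k ns) (SIdx k ns) ℂ) (hX : Xᴴ = -X)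
    (l : ℕ) (c : Fin (l+1) → Fin k) (hloop : c (Fin.last l) = c 0)
    (hadj : ∀ t : Fin l, c t.castSucc ≠ c t.succ)
    (m : ℕ)
    (hm : ((Matrix.charpoly ((loopA ns (X * J - J * X) l c).submatrix
        id (Fin.cast (congrArg ns hloop.symm)))).coeff m).im ≠ 0)
    (hdecomp : ∀ g ∈ Matrix.unitaryGroup (SIdx k ns) ℂ,
      ∃ a o h : Matrix (SIdx k ns) (SIdx k ns) ℂ,
        (a ∈ Matrix.unitaryGroup (SIdx k ns) ℂ ∧ BD a)
        ∧ (o ∈ Matrix.unitaryGroup (SIdx k ns) ℂ ∧ ∀ p q, (o p q).im = 0)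
        ∧ (h ∈ Matrix.unitaryGroup (SIdx k ns) ℂ ∧ h * J = J * h)
        ∧ a * o * h = g) :
    False := by
  classical
  set K := X * J - J * X with hK
  set A₀ := ((loopA ns K l c).submatrix id (Fin.cast (congrArg ns hloop.symm))) with hA₀
  -- identify A₀ with the chain block
  have hA0chain : A₀ = blockOfR ns (chainR ns l c K Kᴴ) (c 0) (c 0) := by
    rw [hA₀, loopA_chain, blockOfR_cast _ hloop]
  set Qp := blockOfR ns (chainR ns l c (Phi J X) (Phi Jᵀ X)) (c 0) (c 0) with hQp
  set qm := (Qp.charpoly).coeff m with hqm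
  -- Step 1: all coefficients of qm are real
  have hqreal : ∀ j : ℕ, (qm.coeff j).im = 0 := by
    have hMm0 : (Mm X).det ≠ 0 := by
      intro hcon
      have h1 := det_coeff_zero_Mm X
      rw [hcon] at h1
      simp at h1
    have hroot : ∀ z : ℂ, z ∈ (Set.range (fun t : ℝ => (t:ℂ)))
          \ {z : ℂ | ((Mm X).det).IsRoot z} →
        (qm - qm.map (starRingEnd ℂ)).IsRoot z := by
      rintro z ⟨⟨t, rfl⟩, hz2⟩
      have hdet : ((1 : Matrix (SIdx k ns) (SIdx k ns) ℂ) - (t:ℂ) • X).det ≠ 0 := by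
        intro hcon
        apply hz2
        show ((Mm X).det).IsRoot (t:ℂ)
        have h1 : (evalRingHom (t:ℂ)) ((Mm X).det)
            = ((Mm X).map (evalRingHom (t:ℂ))).det := by
          rw [RingHom.map_det, RingHom.mapMatrix_apply]
        show ((Mm X).det).eval (t:ℂ) = 0
        show (evalRingHom (t:ℂ)) ((Mm X).det) = 0
        rw [h1, Mm_eval, hcon]
      have him := eval_real J hJreal X hX l c hdecomp m t hdet
      show (qm - qm.map (starRingEnd ℂ)).eval (t:ℂ) = 0
      rw [Polynomial.eval_sub, ← conj_eval qm t]
      rw [Complex.conj_eq_iff_im.mpr him, sub_self]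
    have hrzero : qm - qm.map (starRingEnd ℂ) = 0 := by
      apply Polynomial.eq_zero_of_infinite_isRoot
      apply Set.Infinite.mono (s := (Set.range (fun t : ℝ => (t:ℂ)))
          \ {z : ℂ | ((Mm X).det).IsRoot z})
      · exact hroot
      · apply Set.Infinite.diff
        · exact Set.infinite_range_of_injective (fun x y hxy => by exact_mod_cast hxy)
        · exact Polynomial.finite_setOf_isRoot hMm0
    intro j
    have hfix : qm = qm.map (starRingEnd ℂ) := by
      have := sub_eq_zero.mp hrzero
      exact this
    have : qm.coeff j = (starRingEnd ℂ) (qm.coeff j) := by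
      conv_lhs => rw [hfix]
      rw [Polynomial.coeff_map]
    exact Complex.conj_eq_iff_im.mp this.symm
  -- Step 2: divisibility by X^l
  have hdiv : chainR ns l c (Phi J X) (Phi Jᵀ X)
      = (Polynomial.X : ℂ[X]) ^ l • chainR ns l c ((Phi J X).map Polynomial.divX)
          ((Phi Jᵀ X).map Polynomial.divX) := by
    apply chainR_X_factor
    intro t a b
    have hne := hadj t
    split_ifs with hlt
    · show ((Phi J X) ⟨c t.castSucc, a⟩ ⟨c t.succ, b⟩).coeff 0 = 0
      have h1 : cm 0 (Phi J X) = J := cm0_Phi J X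
      have h2 := congrFun (congrFun h1 ⟨c t.castSucc, a⟩) ⟨c t.succ, b⟩
      rw [show cm 0 (Phi J X) ⟨c t.castSucc, a⟩ ⟨c t.succ, b⟩
          = ((Phi J X) ⟨c t.castSucc, a⟩ ⟨c t.succ, b⟩).coeff 0 from rfl] at h2
      rw [h2]
      exact hJblock _ _ hne
    · show ((Phi Jᵀ X) ⟨c t.castSucc, a⟩ ⟨c t.succ, b⟩).coeff 0 = 0
      have h1 : cm 0 (Phi Jᵀ X) = Jᵀ := cm0_Phi Jᵀ X
      have h2 := congrFun (congrFun h1 ⟨c t.castSucc, a⟩) ⟨c t.succ, b⟩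
      rw [show cm 0 (Phi Jᵀ X) ⟨c t.castSucc, a⟩ ⟨c t.succ, b⟩
          = ((Phi Jᵀ X) ⟨c t.castSucc, a⟩ ⟨c t.succ, b⟩).coeff 0 from rfl] at h2
      rw [h2]
      show J ⟨c t.succ, b⟩ ⟨c t.castSucc, a⟩ = 0
      exact hJblock _ _ (Ne.symm hne)
  set Bm := blockOfR ns (chainR ns l c ((Phi J X).map Polynomial.divX)
      ((Phi Jᵀ X).map Polynomial.divX)) (c 0) (c 0) with hBm
  have hQpBm : Qp = (Polynomial.X : ℂ[X]) ^ l • Bm := by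
    rw [hQp, hdiv, blockOfR_smul]
  -- Step 3: identify constant coefficient matrix of Bm
  have hJH : Jᴴ = Jᵀ := by
    ext p q
    rw [Matrix.conjTranspose_apply, Matrix.transpose_apply]
    exact Complex.conj_eq_iff_im.mpr (hJreal q p)
  have hKH : Kᴴ = X * Jᵀ - Jᵀ * X := by
    rw [hK, conjTranspose_sub, conjTranspose_mul, conjTranspose_mul, hJH, hX]
    rw [Matrix.mul_neg, Matrix.neg_mul, sub_neg_eq_add, neg_add_eq_sub]
  have hBm0 : cm 0 Bm = (2:ℂ) ^ l • A₀ := by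
    have h1 : cm 0 Bm = blockOfR ns ((chainR ns l c ((Phi J X).map Polynomial.divX)
        ((Phi Jᵀ X).map Polynomial.divX)).map (constantCoeff : ℂ[X] →+* ℂ)) (c 0) (c 0) := by
      rw [hBm]
      rfl
    rw [h1, chainR_map]
    have hPd : ((Phi J X).map Polynomial.divX).map (constantCoeff : ℂ[X] →+* ℂ)
        = cm 1 (Phi J X) := by
      ext p q
      show ((Phi J X p q).divX).coeff 0 = (Phi J X p q).coeff 1
      rw [Polynomial.coeff_divX]
    have hPsd : ((Phi Jᵀ X).map Polynomial.divX).map (constantCoeff : ℂ[X] →+* ℂ)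
        = cm 1 (Phi Jᵀ X) := by
      ext p q
      show ((Phi Jᵀ X p q).divX).coeff 0 = (Phi Jᵀ X p q).coeff 1
      rw [Polynomial.coeff_divX]
    rw [hPd, hPsd, cm1_Phi, cm1_Phi]
    have hcong : chainR ns l c
        ((X * J - J * X) + (X * J - J * X) + (((Mm X).det * (Mp X).det).coeff 1) • J)
        ((X * Jᵀ - Jᵀ * X) + (X * Jᵀ - Jᵀ * X) + (((Mm X).det * (Mp X).det).coeff 1) • Jᵀ)
        = chainR ns l c ((2:ℂ) • K) ((2:ℂ) • Kᴴ) := by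
      apply chainR_congr l c _ _ _ _ hadj
      · intro i j hij
        ext a b
        show (X * J - J * X) ⟨i,a⟩ ⟨j,b⟩ + (X * J - J * X) ⟨i,a⟩ ⟨j,b⟩
            + (((Mm X).det * (Mp X).det).coeff 1) * J ⟨i,a⟩ ⟨j,b⟩
            = (2:ℂ) * K ⟨i,a⟩ ⟨j,b⟩
        rw [hJblock ⟨i,a⟩ ⟨j,b⟩ hij, mul_zero, add_zero, hK, two_mul]
      · intro i j hij
        ext a b
        show (X * Jᵀ - Jᵀ * X) ⟨i,a⟩ ⟨j,b⟩ + (X * Jᵀ - Jᵀ * X) ⟨i,a⟩ ⟨j,b⟩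
            + (((Mm X).det * (Mp X).det).coeff 1) * Jᵀ ⟨i,a⟩ ⟨j,b⟩
            = (2:ℂ) * Kᴴ ⟨i,a⟩ ⟨j,b⟩
        rw [hKH]
        rw [show Jᵀ ⟨i,a⟩ ⟨j,b⟩ = J ⟨j,b⟩ ⟨i,a⟩ from rfl,
          hJblock ⟨j,b⟩ ⟨i,a⟩ (Ne.symm hij), mul_zero, add_zero, two_mul]
    rw [hcong, chainR_smul, blockOfR_smul, hA0chain]
  -- Step 4: scaling relation over ℂ[X]
  set N := Fintype.card (Fin (ns (c 0))) with hN
  have hmN : m ≤ N := by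
    by_contra hgt
    push_neg at hgt
    apply hm
    rw [Polynomial.coeff_eq_zero_of_natDegree_lt]
    · simp
    · rw [Matrix.charpoly_natDegree_eq_dim]
      omega
  have hscale := charpoly_smul_coeff ((Polynomial.X : ℂ[X]) ^ l) Bm m
  rw [← hQpBm, ← hN, ← hqm] at hscale
  -- take the coefficient at l*N on both sides
  have hco := congrArg (fun p => p.coeff (l * N)) hscale
  have hL : (((Polynomial.X : ℂ[X]) ^ l) ^ m * qm).coeff (l * N)
      = qm.coeff (l * N - l * m) := by
    have h3 : l * N = (l * N - l * m) + l * m := by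
      have : l * m ≤ l * N := Nat.mul_le_mul_left l hmN
      omega
    rw [← pow_mul]
    conv_lhs => rw [h3]
    exact Polynomial.coeff_X_pow_mul qm (l * m) (l * N - l * m)
  have hR : (((Polynomial.X : ℂ[X]) ^ l) ^ N * (Bm.charpoly.coeff m)).coeff (l * N)
      = (Bm.charpoly.coeff m).coeff 0 := by
    rw [← pow_mul]
    have h2 := Polynomial.coeff_X_pow_mul (Bm.charpoly.coeff m) (l * N) 0
    simpa using h2
  rw [hL, hR] at hco
  -- the constant coefficient is the charpoly coefficient of 2^l • A₀
  have hconst : (Bm.charpoly.coeff m).coeff 0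
      = ((((2:ℂ) ^ l) • A₀).charpoly).coeff m := by
    have h1 := Matrix.charpoly_map Bm (constantCoeff : ℂ[X] →+* ℂ)
    have h2 : Bm.map (constantCoeff : ℂ[X] →+* ℂ) = ((2:ℂ) ^ l) • A₀ := by
      rw [← hBm0]
      rfl
    rw [h2] at h1
    calc (Bm.charpoly.coeff m).coeff 0
        = constantCoeff (Bm.charpoly.coeff m) := rfl
      _ = ((Bm.charpoly).map (constantCoeff : ℂ[X] →+* ℂ)).coeff m := by
          rw [Polynomial.coeff_map]
      _ = _ := by rw [← h1]
  -- so the charpoly coefficient of 2^l • A₀ is real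
  have him2 : (((((2:ℂ) ^ l) • A₀).charpoly).coeff m).im = 0 := by
    rw [← hconst, ← hco]
    exact hqreal (l * N - l * m)
  -- Step 5: final scaling over ℂ
  have hscale2 := charpoly_smul_coeff ((2:ℂ) ^ l) A₀ m
  rw [← hN] at hscale2
  have h2lm : ((2:ℂ) ^ l) ^ m ≠ 0 := pow_ne_zero _ (pow_ne_zero _ two_ne_zero)
  have h2lN : ((2:ℂ) ^ l) ^ N ≠ 0 := pow_ne_zero _ (pow_ne_zero _ two_ne_zero)
  have hcA : A₀.charpoly.coeff m
      = (((2:ℂ) ^ l) ^ m / ((2:ℂ) ^ l) ^ N) * ((((2:ℂ) ^ l) • A₀).charpoly).coeff m := by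
    field_simp
    linear_combination hscale2.symm
  apply hm
  rw [hcA]
  have hcast : (((2:ℂ) ^ l) ^ m / ((2:ℂ) ^ l) ^ N)
      = (((2:ℝ) ^ l) ^ m / ((2:ℝ) ^ l) ^ N : ℝ) := by
    push_cast
    ring
  rw [hcast, Complex.mul_im, him2, mul_zero, Complex.ofReal_im, zero_mul, add_zero]

end LoopAux

/-- Lemma 5.3, key machinery: let `L = U(n₁)×⋯×U(n_k) ⊂ U(n)` be
block-diagonal, `G' = O(n)` (real unitary matrices), and `J = diag(J₁,…,J_k)` a real
block-diagonal matrix.  If there are a skew-Hermitian `X` and a loop `i₀→⋯→i_l` such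
that the characteristic polynomial of `A_{i₀⋯i_l}([X,J])` does not have all real
coefficients, then the multiplication map `L × G' × G_J → U(n)` is not surjective,
i.e. `L·G'·G_J ≠ U(n)`. -/
theorem not_surjective_of_loopA_charpoly_not_real (k : ℕ) (ns : Fin k → ℕ)
    (J : Matrix (SIdx k ns) (SIdx k ns) ℂ)
    (hJreal : ∀ a b, (J a b).im = 0)
    (hJblock : ∀ a b : SIdx k ns, a.1 ≠ b.1 → J a b = 0)
    (X : Matrix (SIdx k ns) (SIdx k ns) ℂ) (hX : Xᴴ = -X)
    (l : ℕ) (hl : 2 ≤ l) (c : Fin (l+1) → Fin k) (hloop : c (Fin.last l) = c 0)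
    (hadj : ∀ t : Fin l, c t.castSucc ≠ c t.succ)
    (hchar : ∃ m : ℕ,
      ((Matrix.charpoly ((loopA ns (X * J - J * X) l c).submatrix
        id (Fin.cast (congrArg ns hloop.symm)))).coeff m).im ≠ 0) :
    {g : Matrix (SIdx k ns) (SIdx k ns) ℂ |
        g ∈ Matrix.unitaryGroup (SIdx k ns) ℂ ∧ ∀ a b : SIdx k ns, a.1 ≠ b.1 → g a b = 0}
      * {g | g ∈ Matrix.unitaryGroup (SIdx k ns) ℂ ∧ ∀ a b, (g a b).im = 0}
      * {g | g ∈ Matrix.unitaryGroup (SIdx k ns) ℂ ∧ g * J = J * g}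
      ≠ (Matrix.unitaryGroup (SIdx k ns) ℂ : Set (Matrix (SIdx k ns) (SIdx k ns) ℂ)) := by
  intro hEq
  obtain ⟨m, hm⟩ := hchar
  apply LoopAux.final J hJreal hJblock X hX l c hloop hadj m hm
  intro g hg
  have hmem : g ∈ ({g : Matrix (SIdx k ns) (SIdx k ns) ℂ |
        g ∈ Matrix.unitaryGroup (SIdx k ns) ℂ ∧ ∀ a b : SIdx k ns, a.1 ≠ b.1 → g a b = 0}
      * {g | g ∈ Matrix.unitaryGroup (SIdx k ns) ℂ ∧ ∀ a b, (g a b).im = 0}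
      * {g | g ∈ Matrix.unitaryGroup (SIdx k ns) ℂ ∧ g * J = J * g}) := by
    rw [hEq]
    exact hg
  rw [Set.mem_mul] at hmem
  obtain ⟨x, hx, h3, hh3, hxh⟩ := hmem
  rw [Set.mem_mul] at hx
  obtain ⟨a, ha, o, ho, hao⟩ := hx
  exact ⟨a, o, h3, ⟨ha.1, ha.2⟩, ⟨ho.1, ho.2⟩, ⟨hh3.1, hh3.2⟩, by rw [← hxh, ← hao]⟩
end

section
/- Let n = n₁+n₂+n₃ = m₁+m₂+m₃ be two partitions of n by positive integers. Set G = U(n), L = U(n₁)×U(n₂)×U(n₃) (block-diagonal), G' = O(n), and let H ⊂ U(n) be conjugate by an element of O(n) to U(m₁)×U(m₂)×U(m₃). Then L·G'·H ≠ G. -/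
open Matrix
open scoped Pointwise

/-- The block index of position `i` for the partition `n = ns 0 + ⋯ + ns (k-1)`. -/
def blkIdx (ns : ℕ → ℕ) (k i : ℕ) : ℕ :=
  ((Finset.range k).filter (fun j => (∑ t ∈ Finset.range (j+1), ns t) ≤ i)).card

/-- `U(n₁) × ⋯ × U(n_k)` embedded block-diagonally in `U(n)`. -/
def blockUnitary (n k : ℕ) (ns : ℕ → ℕ) : Set (Matrix (Fin n) (Fin n) ℂ) :=
  {u | u ∈ Matrix.unitaryGroup (Fin n) ℂ ∧
    ∀ i j : Fin n, blkIdx ns k i.1 ≠ blkIdx ns k j.1 → u i j = 0}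

/-- `O(n)` viewed inside `U(n)`: unitary matrices with real entries. -/
def realOrthogonal (n : ℕ) : Set (Matrix (Fin n) (Fin n) ℂ) :=
  {g | g ∈ Matrix.unitaryGroup (Fin n) ℂ ∧ ∀ i j, (g i j).im = 0}

/-! ### Auxiliary machinery -/

section Aux

open Complex

lemma blkIdx_three (a b c i : ℕ) (hi : i < a + b + c) :
    blkIdx (fun t => if t = 0 then a else if t = 1 then b else c) 3 i
      = if i < a then 0 else if i < a + b then 1 else 2 := by
  unfold blkIdx
  rw [Finset.card_filter, Finset.sum_range_succ, Finset.sum_range_succ,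
    Finset.sum_range_one]
  simp only [Finset.sum_range_succ, Finset.sum_range_one]
  norm_num
  split_ifs <;> omega

noncomputable def tau {n : ℕ} (p₁ p₂ q₁ q₂ : Fin n → ℂ) (v : Matrix (Fin n) (Fin n) ℂ) : ℂ :=
  Matrix.trace (Matrix.diagonal p₁ * v * Matrix.diagonal q₂ * star v *
    Matrix.diagonal p₂ * v * Matrix.diagonal q₁ * star v)

lemma tau_invariant {n : ℕ} (p₁ p₂ q₁ q₂ : Fin n → ℂ)
    (a b v : Matrix (Fin n) (Fin n) ℂ)
    (ha1 : a * star a = 1) (ha2 : star a * a = 1)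
    (hb : b * star b = 1)
    (hap₁ : a * Matrix.diagonal p₁ = Matrix.diagonal p₁ * a)
    (hap₂ : a * Matrix.diagonal p₂ = Matrix.diagonal p₂ * a)
    (hbq₁ : b * Matrix.diagonal q₁ = Matrix.diagonal q₁ * b)
    (hbq₂ : b * Matrix.diagonal q₂ = Matrix.diagonal q₂ * b) :
    tau p₁ p₂ q₁ q₂ (a * v * b) = tau p₁ p₂ q₁ q₂ v := by
  have hcan : ∀ (Q X : Matrix (Fin n) (Fin n) ℂ), b * Q = Q * b →
      b * (Q * (star b * X)) = Q * X := by
    intro Q X h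
    rw [← mul_assoc, h, mul_assoc, ← mul_assoc b, hb, one_mul]
  have hsap₂ : star a * Matrix.diagonal p₂ = Matrix.diagonal p₂ * star a := by
    calc star a * Matrix.diagonal p₂
        = star a * Matrix.diagonal p₂ * (a * star a) := by rw [ha1, mul_one]
      _ = star a * (Matrix.diagonal p₂ * a) * star a := by
          rw [mul_assoc, mul_assoc, mul_assoc]
      _ = star a * (a * Matrix.diagonal p₂) * star a := by rw [hap₂]
      _ = Matrix.diagonal p₂ * star a := by
          rw [← mul_assoc, ha2, one_mul]
  have hcanA : ∀ X : Matrix (Fin n) (Fin n) ℂ,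
      star a * (Matrix.diagonal p₂ * (a * X)) = Matrix.diagonal p₂ * X := by
    intro X
    rw [← mul_assoc, hsap₂, mul_assoc, ← mul_assoc (star a), ha2, one_mul]
  unfold tau
  simp only [StarMul.star_mul, mul_assoc]
  rw [hcan _ _ hbq₂, hcan _ _ hbq₁, hcanA]
  rw [← mul_assoc (Matrix.diagonal p₁) a, ← hap₁, mul_assoc]
  rw [Matrix.trace_mul_comm]
  simp only [mul_assoc]
  rw [ha2]
  simp only [mul_one]

lemma star_map_conj {n : ℕ} (v : Matrix (Fin n) (Fin n) ℂ) :
    star (v.map (starRingEnd ℂ)) = (star v).map (starRingEnd ℂ) := by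
  ext i j
  simp [Matrix.star_apply, Matrix.map_apply]

lemma trace_map_conj {n : ℕ} (M : Matrix (Fin n) (Fin n) ℂ) :
    Matrix.trace (M.map (starRingEnd ℂ)) = (starRingEnd ℂ) (Matrix.trace M) := by
  simp [Matrix.trace, Matrix.diag, Matrix.map_apply, map_sum]

lemma tau_map_conj {n : ℕ} (p₁ p₂ q₁ q₂ : Fin n → ℂ)
    (hp₁ : ∀ i, (starRingEnd ℂ) (p₁ i) = p₁ i) (hp₂ : ∀ i, (starRingEnd ℂ) (p₂ i) = p₂ i)
    (hq₁ : ∀ i, (starRingEnd ℂ) (q₁ i) = q₁ i) (hq₂ : ∀ i, (starRingEnd ℂ) (q₂ i) = q₂ i)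
    (v : Matrix (Fin n) (Fin n) ℂ) :
    tau p₁ p₂ q₁ q₂ (v.map (starRingEnd ℂ)) = (starRingEnd ℂ) (tau p₁ p₂ q₁ q₂ v) := by
  have hd : ∀ (d : Fin n → ℂ), (∀ i, (starRingEnd ℂ) (d i) = d i) →
      (Matrix.diagonal d).map (starRingEnd ℂ) = Matrix.diagonal d := by
    intro d h
    rw [Matrix.diagonal_map (map_zero _)]
    exact congrArg Matrix.diagonal (funext h)
  unfold tau
  conv_lhs =>
    rw [star_map_conj, ← hd p₁ hp₁, ← hd p₂ hp₂, ← hd q₁ hq₁, ← hd q₂ hq₂,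
      ← Matrix.map_mul, ← Matrix.map_mul, ← Matrix.map_mul, ← Matrix.map_mul,
      ← Matrix.map_mul, ← Matrix.map_mul, ← Matrix.map_mul, trace_map_conj]

lemma tau_eq_sum {n : ℕ} (p₁ p₂ q₁ q₂ : Fin n → ℂ) (v : Matrix (Fin n) (Fin n) ℂ) :
    tau p₁ p₂ q₁ q₂ v =
      ∑ i : Fin n, ∑ k : Fin n, ∑ j : Fin n, ∑ l : Fin n,
        (p₁ i * v i j * q₂ j * star (v k j)) * (p₂ k * v k l * q₁ l * star (v i l)) := by
  have h : ∀ A B : Matrix (Fin n) (Fin n) ℂ,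
      Matrix.trace (A * B) = ∑ i : Fin n, ∑ k : Fin n, A i k * B k i := by
    intro A B
    simp [Matrix.trace, Matrix.diag, Matrix.mul_apply]
  have e : Matrix.diagonal p₁ * v * Matrix.diagonal q₂ * star v *
      Matrix.diagonal p₂ * v * Matrix.diagonal q₁ * star v
      = (Matrix.diagonal p₁ * v * Matrix.diagonal q₂ * star v) *
        (Matrix.diagonal p₂ * v * Matrix.diagonal q₁ * star v) := by
    simp only [mul_assoc]
  unfold tau
  rw [e, h]
  refine Finset.sum_congr rfl fun i _ => Finset.sum_congr rfl fun k _ => ?_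
  have hA : ∀ (p q : Fin n → ℂ) (x y : Fin n),
      (Matrix.diagonal p * v * Matrix.diagonal q * star v) x y
        = ∑ j : Fin n, p x * v x j * q j * star (v y j) := by
    intro p q x y
    rw [Matrix.mul_apply]
    refine Finset.sum_congr rfl fun j _ => ?_
    rw [Matrix.mul_diagonal, Matrix.diagonal_mul, Matrix.star_apply]
  rw [hA, hA, Finset.sum_mul]
  refine Finset.sum_congr rfl fun j _ => ?_
  rw [Finset.mul_sum]

lemma exists_perm_three {α : Type*} [DecidableEq α] {a₀ a₁ a₂ b₀ b₁ b₂ : α}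
    (h01 : a₀ ≠ a₁) (h02 : a₀ ≠ a₂) (h12 : a₁ ≠ a₂)
    (g01 : b₀ ≠ b₁) (g02 : b₀ ≠ b₂) (g12 : b₁ ≠ b₂) :
    ∃ σ : Equiv.Perm α, σ a₀ = b₀ ∧ σ a₁ = b₁ ∧ σ a₂ = b₂ := by
  set s₁ := Equiv.swap a₀ b₀ with hs₁
  set a₁' := s₁ a₁ with ha₁'
  set a₂' := s₁ a₂ with ha₂'
  set s₂ := Equiv.swap a₁' b₁ with hs₂
  set a₂'' := s₂ a₂' with ha₂''
  set s₃ := Equiv.swap a₂'' b₂ with hs₃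
  have hinj₁ := s₁.injective
  have hinj₂ := s₂.injective
  have e10 : a₁' ≠ b₀ := by
    have : s₁ a₀ = b₀ := Equiv.swap_apply_left _ _
    rw [← this]; exact fun h => h01.symm (hinj₁ h)
  have e20 : a₂' ≠ b₀ := by
    have : s₁ a₀ = b₀ := Equiv.swap_apply_left _ _
    rw [← this]; exact fun h => h02.symm (hinj₁ h)
  have e21 : a₂' ≠ a₁' := fun h => h12.symm (hinj₁ h)
  have f20 : a₂'' ≠ b₀ := by
    have : s₂ b₀ = b₀ := Equiv.swap_apply_of_ne_of_ne (Ne.symm e10) g01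
    rw [← this]; exact fun h => e20 (hinj₂ h)
  have f21 : a₂'' ≠ b₁ := by
    have : s₂ a₁' = b₁ := Equiv.swap_apply_left _ _
    rw [← this]; exact fun h => e21 (hinj₂ h)
  refine ⟨(s₁.trans s₂).trans s₃, ?_, ?_, ?_⟩
  · show s₃ (s₂ (s₁ a₀)) = b₀
    rw [Equiv.swap_apply_left, Equiv.swap_apply_of_ne_of_ne (Ne.symm e10) g01,
      Equiv.swap_apply_of_ne_of_ne (Ne.symm f20) g02]
  · show s₃ (s₂ (s₁ a₁)) = b₁
    rw [← ha₁', Equiv.swap_apply_left, Equiv.swap_apply_of_ne_of_ne (Ne.symm f21) g12]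
  · show s₃ (s₂ (s₁ a₂)) = b₂
    rw [← ha₂', ← ha₂'', Equiv.swap_apply_left]

noncomputable def coreA : Matrix (Fin 3) (Fin 3) ℂ :=
  !![4+I, 2, 2; 2, 2*I, -4-I; 2, -4-I, 2*I]

noncomputable def coreU : Matrix (Fin 3) (Fin 3) ℂ := (5:ℂ)⁻¹ • coreA

lemma coreA_mul : star coreA * coreA = (25:ℂ) • 1 := by
  have h : star coreA = coreAᴴ := rfl
  rw [h]
  ext i j
  fin_cases i <;> fin_cases j <;>
    simp [coreA, Matrix.mul_apply, Fin.sum_univ_three, Matrix.conjTranspose_apply,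
      Matrix.one_apply, Matrix.vecHead, Matrix.vecTail, Complex.ext_iff] <;>
    (try ring_nf) <;> simp

lemma coreU_unitary : star coreU * coreU = 1 := by
  unfold coreU
  rw [star_smul, Matrix.smul_mul, Matrix.mul_smul, coreA_mul, smul_smul, smul_smul]
  rw [show (star (5:ℂ)⁻¹ * (5:ℂ)⁻¹ * 25 : ℂ) = 1 by
    rw [show star (5:ℂ)⁻¹ = (5:ℂ)⁻¹ by simp [Complex.ext_iff]]
    norm_num]
  rw [one_smul]

lemma coreU_im :
    (coreU 0 1 * star (coreU 1 1) * (coreU 1 0 * star (coreU 0 0))).im ≠ 0 := by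
  simp [coreU, coreA, Matrix.vecHead, Matrix.vecTail, Complex.ext_iff]

lemma comm_diag {n k : ℕ} {ns : ℕ → ℕ} {a : Matrix (Fin n) (Fin n) ℂ}
    (hpat : ∀ i j : Fin n, blkIdx ns k i.1 ≠ blkIdx ns k j.1 → a i j = 0) (t : ℕ) :
    a * Matrix.diagonal (fun i : Fin n => if blkIdx ns k i.1 = t then (1:ℂ) else 0)
      = Matrix.diagonal (fun i : Fin n => if blkIdx ns k i.1 = t then (1:ℂ) else 0) * a := by
  ext i j
  rw [Matrix.mul_diagonal, Matrix.diagonal_mul]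
  by_cases h : blkIdx ns k i.1 = blkIdx ns k j.1
  · rw [h]; ring
  · rw [hpat i j h]; ring

lemma map_conj_mul_star {n : ℕ} {l : Matrix (Fin n) (Fin n) ℂ} (h : l * star l = 1) :
    l.map (starRingEnd ℂ) * star (l.map (starRingEnd ℂ)) = 1 := by
  rw [star_map_conj, ← Matrix.map_mul, h, Matrix.map_one _ (map_zero _) (map_one _)]

lemma star_mul_map_conj {n : ℕ} {l : Matrix (Fin n) (Fin n) ℂ} (h : star l * l = 1) :
    star (l.map (starRingEnd ℂ)) * l.map (starRingEnd ℂ) = 1 := by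
  rw [star_map_conj, ← Matrix.map_mul, h, Matrix.map_one _ (map_zero _) (map_one _)]

end Aux

set_option maxHeartbeats 4000000 in
/-- Proposition 5.5: for partitions `n = n₁+n₂+n₃ = m₁+m₂+m₃` by
positive integers, `L = U(n₁)×U(n₂)×U(n₃)` block-diagonal, `G' = O(n)`, and `H` any
`O(n)`-conjugate of the block-diagonal `U(m₁)×U(m₂)×U(m₃)`, one has `L·G'·H ⊊ U(n)`. -/
theorem three_by_three_not_surjective
    (n n₁ n₂ n₃ m₁ m₂ m₃ : ℕ)
    (hn₁ : 0 < n₁) (hn₂ : 0 < n₂) (hn₃ : 0 < n₃)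
    (hm₁ : 0 < m₁) (hm₂ : 0 < m₂) (hm₃ : 0 < m₃)
    (hL : n = n₁ + n₂ + n₃) (hM : n = m₁ + m₂ + m₃)
    (H : Set (Matrix (Fin n) (Fin n) ℂ))
    (w : Matrix (Fin n) (Fin n) ℂ) (hw : w ∈ realOrthogonal n)
    (hH : H = (fun x => w * x * w⁻¹) ''
      blockUnitary n 3 (fun t => if t = 0 then m₁ else if t = 1 then m₂ else m₃)) :
    blockUnitary n 3 (fun t => if t = 0 then n₁ else if t = 1 then n₂ else n₃)
      * realOrthogonal n * H
      ≠ (Matrix.unitaryGroup (Fin n) ℂ : Set (Matrix (Fin n) (Fin n) ℂ)) := by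

  intro hEq
  set nsf : ℕ → ℕ := fun t => if t = 0 then n₁ else if t = 1 then n₂ else n₃ with hnsf
  set msf : ℕ → ℕ := fun t => if t = 0 then m₁ else if t = 1 then m₂ else m₃ with hmsf
  have hbn : ∀ i : Fin n, blkIdx nsf 3 i.1
      = if i.1 < n₁ then 0 else if i.1 < n₁ + n₂ then 1 else 2 := by
    intro i
    rw [hnsf]
    exact blkIdx_three n₁ n₂ n₃ i.1 (by omega)
  have hbm : ∀ i : Fin n, blkIdx msf 3 i.1
      = if i.1 < m₁ then 0 else if i.1 < m₁ + m₂ then 1 else 2 := by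
    intro i
    rw [hmsf]
    exact blkIdx_three m₁ m₂ m₃ i.1 (by omega)
  obtain ⟨i1, hvi1⟩ : ∃ i : Fin n, (i : ℕ) = 0 := ⟨⟨0, by omega⟩, rfl⟩
  obtain ⟨i2, hvi2⟩ : ∃ i : Fin n, (i : ℕ) = n₁ := ⟨⟨n₁, by omega⟩, rfl⟩
  obtain ⟨i3, hvi3⟩ : ∃ i : Fin n, (i : ℕ) = n₁ + n₂ := ⟨⟨n₁ + n₂, by omega⟩, rfl⟩
  obtain ⟨j1, hvj1⟩ : ∃ i : Fin n, (i : ℕ) = 0 := ⟨⟨0, by omega⟩, rfl⟩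
  obtain ⟨j2, hvj2⟩ : ∃ i : Fin n, (i : ℕ) = m₁ := ⟨⟨m₁, by omega⟩, rfl⟩
  obtain ⟨j3, hvj3⟩ : ∃ i : Fin n, (i : ℕ) = m₁ + m₂ := ⟨⟨m₁ + m₂, by omega⟩, rfl⟩
  obtain ⟨t1, hvt1⟩ : ∃ i : Fin n, (i : ℕ) = 1 := ⟨⟨1, by omega⟩, rfl⟩
  obtain ⟨t2, hvt2⟩ : ∃ i : Fin n, (i : ℕ) = 2 := ⟨⟨2, by omega⟩, rfl⟩
  have hbn1 : blkIdx nsf 3 i1.1 = 0 := by rw [hbn, hvi1]; split_ifs <;> omega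
  have hbn2 : blkIdx nsf 3 i2.1 = 1 := by rw [hbn, hvi2]; split_ifs <;> omega
  have hbn3 : blkIdx nsf 3 i3.1 = 2 := by rw [hbn, hvi3]; split_ifs <;> omega
  have hbm1 : blkIdx msf 3 j1.1 = 0 := by rw [hbm, hvj1]; split_ifs <;> omega
  have hbm2 : blkIdx msf 3 j2.1 = 1 := by rw [hbm, hvj2]; split_ifs <;> omega
  have hbm3 : blkIdx msf 3 j3.1 = 2 := by rw [hbm, hvj3]; split_ifs <;> omega
  obtain ⟨σr, hσr1, hσr2, hσr3⟩ :=
    exists_perm_three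
      (show i1 ≠ i2 by simp [Fin.ext_iff, hvi1, hvi2]; omega)
      (show i1 ≠ i3 by simp [Fin.ext_iff, hvi1, hvi3]; omega)
      (show i2 ≠ i3 by simp [Fin.ext_iff, hvi2, hvi3]; omega)
      (show i1 ≠ t1 by simp [Fin.ext_iff, hvi1, hvt1])
      (show i1 ≠ t2 by simp [Fin.ext_iff, hvi1, hvt2])
      (show t1 ≠ t2 by simp [Fin.ext_iff, hvt1, hvt2])
  obtain ⟨σc, hσc1, hσc2, hσc3⟩ :=
    exists_perm_three
      (show j1 ≠ j2 by simp [Fin.ext_iff, hvj1, hvj2]; omega)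
      (show j1 ≠ j3 by simp [Fin.ext_iff, hvj1, hvj3]; omega)
      (show j2 ≠ j3 by simp [Fin.ext_iff, hvj2, hvj3]; omega)
      (show j1 ≠ t1 by simp [Fin.ext_iff, hvj1, hvt1])
      (show j1 ≠ t2 by simp [Fin.ext_iff, hvj1, hvt2])
      (show t1 ≠ t2 by simp [Fin.ext_iff, hvt1, hvt2])
  -- note : σr i1 = i1 (=⟨0,_⟩), σr i2 = t1, σr i3 = t2, and similarly for σc
  have hsplit : n = 3 + (n - 3) := by omega
  set ρ₀ : Fin n ≃ (Fin 3 ⊕ Fin (n - 3)) :=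
    (finCongr hsplit).trans finSumFinEquiv.symm with hρ₀
  have hρ₀l : ∀ (k : Fin n) (h : k.1 < 3), ρ₀ k = Sum.inl ⟨k.1, h⟩ := by
    intro k h
    have h1 : (finCongr hsplit) k = Fin.castAdd (n - 3) ⟨k.1, h⟩ := by
      ext; simp
    rw [hρ₀, Equiv.trans_apply, h1, finSumFinEquiv_symm_apply_castAdd]
  have hρ₀v : ∀ (k : Fin n) (a : Fin 3), ρ₀ k = Sum.inl a → k.1 = a.1 := by
    intro k a h
    have hk : k = ρ₀.symm (Sum.inl a) := by rw [← h, Equiv.symm_apply_apply]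
    rw [hk, hρ₀]
    simp [finSumFinEquiv_apply_left]
  set ρr : Fin n ≃ (Fin 3 ⊕ Fin (n - 3)) := σr.trans ρ₀ with hρr
  set ρc : Fin n ≃ (Fin 3 ⊕ Fin (n - 3)) := σc.trans ρ₀ with hρc
  obtain ⟨f0, hf0⟩ : ∃ a : Fin 3, a = (0 : Fin 3) := ⟨0, rfl⟩
  obtain ⟨f1, hf1⟩ : ∃ a : Fin 3, a = (1 : Fin 3) := ⟨1, rfl⟩
  obtain ⟨f2, hf2⟩ : ∃ a : Fin 3, a = (2 : Fin 3) := ⟨2, rfl⟩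
  have hmk : ∀ (x : Fin n) (h : (x:ℕ) < 3), ρ₀ x = Sum.inl ⟨(x:ℕ), h⟩ := hρ₀l
  have hρr1 : ρr i1 = Sum.inl f0 := by
    rw [hρr, Equiv.trans_apply, hσr1, hmk i1 (by omega)]
    congr 1
    rw [hf0]; exact Fin.ext (by rw [hvi1]; rfl)
  have hρr2 : ρr i2 = Sum.inl f1 := by
    rw [hρr, Equiv.trans_apply, hσr2, hmk t1 (by omega)]
    congr 1
    rw [hf1]; exact Fin.ext (by rw [hvt1]; rfl)
  have hρr3 : ρr i3 = Sum.inl f2 := by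
    rw [hρr, Equiv.trans_apply, hσr3, hmk t2 (by omega)]
    congr 1
    rw [hf2]; exact Fin.ext (by rw [hvt2]; rfl)
  have hρc1 : ρc j1 = Sum.inl f0 := by
    rw [hρc, Equiv.trans_apply, hσc1, hmk j1 (by omega)]
    congr 1
    rw [hf0]; exact Fin.ext (by rw [hvj1]; rfl)
  have hρc2 : ρc j2 = Sum.inl f1 := by
    rw [hρc, Equiv.trans_apply, hσc2, hmk t1 (by omega)]
    congr 1
    rw [hf1]; exact Fin.ext (by rw [hvt1]; rfl)
  have hρc3 : ρc j3 = Sum.inl f2 := by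
    rw [hρc, Equiv.trans_apply, hσc3, hmk t2 (by omega)]
    congr 1
    rw [hf2]; exact Fin.ext (by rw [hvt2]; rfl)
  -- forcing : only the marked indices map into the `Fin 3` block
  have hforce_r : ∀ (i : Fin n) (a : Fin 3), ρr i = Sum.inl a → i = i1 ∨ i = i2 ∨ i = i3 := by
    intro i a h
    have hv := hρ₀v (σr i) a h
    have h3 : (σr i : ℕ) = 0 ∨ (σr i : ℕ) = 1 ∨ (σr i : ℕ) = 2 := by
      have := a.2; omega
    rcases h3 with h0 | h0 | h0
    · left; apply σr.injective; rw [hσr1]; exact Fin.ext (by rw [h0, hvi1])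
    · right; left; apply σr.injective; rw [hσr2]; exact Fin.ext (by rw [h0, hvt1])
    · right; right; apply σr.injective; rw [hσr3]; exact Fin.ext (by rw [h0, hvt2])
  have hforce_c : ∀ (j : Fin n) (b : Fin 3), ρc j = Sum.inl b → j = j1 ∨ j = j2 ∨ j = j3 := by
    intro j b h
    have hv := hρ₀v (σc j) b h
    have h3 : (σc j : ℕ) = 0 ∨ (σc j : ℕ) = 1 ∨ (σc j : ℕ) = 2 := by
      have := b.2; omega
    rcases h3 with h0 | h0 | h0
    · left; apply σc.injective; rw [hσc1]; exact Fin.ext (by rw [h0, hvj1])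
    · right; left; apply σc.injective; rw [hσc2]; exact Fin.ext (by rw [h0, hvt1])
    · right; right; apply σc.injective; rw [hσc3]; exact Fin.ext (by rw [h0, hvt2])
  -- the special unitary matrix v
  set M : Matrix (Fin 3 ⊕ Fin (n-3)) (Fin 3 ⊕ Fin (n-3)) ℂ :=
    Matrix.fromBlocks coreU 0 0 (1 : Matrix (Fin (n-3)) (Fin (n-3)) ℂ) with hMdef
  have hMunit : star M * M = 1 := by
    rw [hMdef, Matrix.star_eq_conjTranspose, Matrix.fromBlocks_conjTranspose,
      Matrix.fromBlocks_multiply]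
    have h1 : coreUᴴ * coreU = 1 := coreU_unitary
    simp [h1, Matrix.fromBlocks_one]
  set v : Matrix (Fin n) (Fin n) ℂ := M.submatrix ρr ρc with hvdef
  have hvu : v ∈ Matrix.unitaryGroup (Fin n) ℂ := by
    rw [Matrix.mem_unitaryGroup_iff']
    rw [hvdef, Matrix.star_eq_conjTranspose, Matrix.conjTranspose_submatrix,
      Matrix.submatrix_mul_equiv, ← Matrix.star_eq_conjTranspose, hMunit,
      Matrix.submatrix_one_equiv]
  have hv_app : ∀ i j : Fin n, v i j = M (ρr i) (ρc j) := fun i j => rfl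
  -- entries of v
  have hv11 : v i1 j1 = coreU f0 f0 := by
    rw [hv_app, hρr1, hρc1, hMdef]; exact Matrix.fromBlocks_apply₁₁ _ _ _ _ _ _
  have hv12 : v i1 j2 = coreU f0 f1 := by
    rw [hv_app, hρr1, hρc2, hMdef]; exact Matrix.fromBlocks_apply₁₁ _ _ _ _ _ _
  have hv21 : v i2 j1 = coreU f1 f0 := by
    rw [hv_app, hρr2, hρc1, hMdef]; exact Matrix.fromBlocks_apply₁₁ _ _ _ _ _ _
  have hv22 : v i2 j2 = coreU f1 f1 := by
    rw [hv_app, hρr2, hρc2, hMdef]; exact Matrix.fromBlocks_apply₁₁ _ _ _ _ _ _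
  have hvmix1 : ∀ (i j : Fin n) (a : Fin 3) (y : Fin (n-3)),
      ρr i = Sum.inl a → ρc j = Sum.inr y → v i j = 0 := by
    intro i j a y hri hcj
    rw [hv_app, hri, hcj, hMdef, Matrix.fromBlocks_apply₁₂]
    rfl
  have hvmix2 : ∀ (i j : Fin n) (x : Fin (n-3)) (b : Fin 3),
      ρr i = Sum.inr x → ρc j = Sum.inl b → v i j = 0 := by
    intro i j x b hri hcj
    rw [hv_app, hri, hcj, hMdef, Matrix.fromBlocks_apply₂₁]
    rfl
  have hvdd : ∀ (i j : Fin n) (x y : Fin (n-3)),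
      ρr i = Sum.inr x → ρc j = Sum.inr y → v i j ≠ 0 → x = y := by
    intro i j x y hri hcj hne
    rw [hv_app, hri, hcj, hMdef, Matrix.fromBlocks_apply₂₂] at hne
    by_contra hxy
    exact hne (Matrix.one_apply_ne hxy)
  -- the four diagonal weight functions
  set p₁ : Fin n → ℂ := fun i => if blkIdx nsf 3 i.1 = 0 then (1:ℂ) else 0 with hp₁def
  set p₂ : Fin n → ℂ := fun i => if blkIdx nsf 3 i.1 = 1 then (1:ℂ) else 0 with hp₂def
  set q₁ : Fin n → ℂ := fun j => if blkIdx msf 3 j.1 = 0 then (1:ℂ) else 0 with hq₁def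
  set q₂ : Fin n → ℂ := fun j => if blkIdx msf 3 j.1 = 1 then (1:ℂ) else 0 with hq₂def
  -- the decomposition of u = v * w⁻¹ coming from the assumed equality
  have hw1 : w ∈ Matrix.unitaryGroup (Fin n) ℂ := hw.1
  have hwre : ∀ i j, (w i j).im = 0 := hw.2
  have hws : star w * w = 1 := (Unitary.mem_iff.mp hw1).1
  have hws' : w * star w = 1 := (Unitary.mem_iff.mp hw1).2
  have hwinv : w⁻¹ = star w := Matrix.inv_eq_right_inv hws'
  set u : Matrix (Fin n) (Fin n) ℂ := v * star w with hudef
  have hu : u ∈ Matrix.unitaryGroup (Fin n) ℂ := mul_mem hvu (Unitary.star_mem hw1)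
  have humem : u ∈ blockUnitary n 3 nsf * realOrthogonal n * H := by
    rw [hEq]; exact hu
  obtain ⟨p, hp, h, hh, hph⟩ := Set.mem_mul.mp humem
  obtain ⟨l, hl, g, hg, hlg⟩ := Set.mem_mul.mp hp
  rw [hH] at hh
  obtain ⟨h₀, hh₀, hh₀eq⟩ := hh
  have hv_eq : v = l * (g * w) * h₀ := by
    have e1 : v = u * w := by
      rw [hudef, mul_assoc, hws, mul_one]
    rw [e1, ← hph, ← hlg, ← hh₀eq, hwinv]
    simp only [mul_assoc]
    rw [hws, mul_one]
  -- g * w has real entries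
  have ho_im : ∀ i j, ((g * w) i j).im = 0 := by
    intro i j
    rw [Matrix.mul_apply, Complex.im_sum]
    apply Finset.sum_eq_zero
    intro x _
    rw [Complex.mul_im, hg.2, hwre]
    ring
  have ho_conj : (g * w).map (starRingEnd ℂ) = g * w := by
    ext i j
    rw [Matrix.map_apply]
    exact Complex.conj_eq_iff_im.mpr (ho_im i j)
  -- conjugation-fixedness of the weights
  have hfix : ∀ (d : Fin n → ℂ) (c : ℕ → ℕ) (t : ℕ),
      (d = fun i : Fin n => if blkIdx c 3 i.1 = t then (1:ℂ) else 0) →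
      ∀ i, (starRingEnd ℂ) (d i) = d i := by
    intro d c t hd i
    rw [hd]
    dsimp only
    split_ifs <;> simp
  -- τ is real
  have hl_pat := hl.2
  have hh₀_pat := hh₀.2
  have hτ1 : tau p₁ p₂ q₁ q₂ v = tau p₁ p₂ q₁ q₂ (g * w) := by
    rw [hv_eq]
    exact tau_invariant p₁ p₂ q₁ q₂ l h₀ (g * w)
      (Matrix.mem_unitaryGroup_iff.mp hl.1) (Matrix.mem_unitaryGroup_iff'.mp hl.1)
      (Matrix.mem_unitaryGroup_iff.mp hh₀.1)
      (by rw [hp₁def]; exact comm_diag hl_pat 0)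
      (by rw [hp₂def]; exact comm_diag hl_pat 1)
      (by rw [hq₁def]; exact comm_diag hh₀_pat 0)
      (by rw [hq₂def]; exact comm_diag hh₀_pat 1)
  have hτ2 : tau p₁ p₂ q₁ q₂ (v.map (starRingEnd ℂ)) = tau p₁ p₂ q₁ q₂ (g * w) := by
    rw [hv_eq, Matrix.map_mul, Matrix.map_mul, ho_conj]
    refine tau_invariant p₁ p₂ q₁ q₂ _ _ (g * w)
      (map_conj_mul_star (Matrix.mem_unitaryGroup_iff.mp hl.1))
      (star_mul_map_conj (Matrix.mem_unitaryGroup_iff'.mp hl.1))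
      (map_conj_mul_star (Matrix.mem_unitaryGroup_iff.mp hh₀.1))
      ?_ ?_ ?_ ?_
    · rw [hp₁def]
      exact comm_diag (fun i j hij => by
        rw [Matrix.map_apply, hl_pat i j hij, map_zero]) 0
    · rw [hp₂def]
      exact comm_diag (fun i j hij => by
        rw [Matrix.map_apply, hl_pat i j hij, map_zero]) 1
    · rw [hq₁def]
      exact comm_diag (fun i j hij => by
        rw [Matrix.map_apply, hh₀_pat i j hij, map_zero]) 0
    · rw [hq₂def]
      exact comm_diag (fun i j hij => by
        rw [Matrix.map_apply, hh₀_pat i j hij, map_zero]) 1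
  have hτ3 : tau p₁ p₂ q₁ q₂ (v.map (starRingEnd ℂ))
      = (starRingEnd ℂ) (tau p₁ p₂ q₁ q₂ v) :=
    tau_map_conj p₁ p₂ q₁ q₂ (hfix p₁ nsf 0 hp₁def) (hfix p₂ nsf 1 hp₂def)
      (hfix q₁ msf 0 hq₁def) (hfix q₂ msf 1 hq₂def) v
  have hre : (tau p₁ p₂ q₁ q₂ v).im = 0 := by
    apply Complex.conj_eq_iff_im.mp
    rw [← hτ3, hτ2, ← hτ1]
  -- now compute τ v explicitly
  have hP1 : p₁ i1 = 1 := by rw [hp₁def]; dsimp only; rw [if_pos hbn1]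
  have hP2 : p₂ i2 = 1 := by rw [hp₂def]; dsimp only; rw [if_pos hbn2]
  have hQ1 : q₁ j1 = 1 := by rw [hq₁def]; dsimp only; rw [if_pos hbm1]
  have hQ2 : q₂ j2 = 1 := by rw [hq₂def]; dsimp only; rw [if_pos hbm2]
  set cval : ℂ := coreU f0 f1 * star (coreU f1 f1) * (coreU f1 f0 * star (coreU f0 f0))
    with hcval
  have hforce : ∀ i k j l : Fin n,
      (p₁ i * v i j * q₂ j * star (v k j)) * (p₂ k * v k l * q₁ l * star (v i l)) ≠ 0 →
      i = i1 ∧ k = i2 ∧ j = j2 ∧ l = j1 := by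
    intro i k j l hne
    simp only [ne_eq, mul_eq_zero, star_eq_zero, not_or] at hne
    obtain ⟨⟨⟨⟨h1, h2⟩, h3⟩, h4⟩, ⟨⟨h5, h6⟩, h7⟩, h8⟩ := hne
    have hbi : blkIdx nsf 3 i.1 = 0 := by
      by_contra hc
      exact h1 (by rw [hp₁def]; dsimp only; rw [if_neg hc])
    have hbk : blkIdx nsf 3 k.1 = 1 := by
      by_contra hc
      exact h5 (by rw [hp₂def]; dsimp only; rw [if_neg hc])
    have hbj : blkIdx msf 3 j.1 = 1 := by
      by_contra hc
      exact h3 (by rw [hq₂def]; dsimp only; rw [if_neg hc])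
    have hbl : blkIdx msf 3 l.1 = 0 := by
      by_contra hc
      exact h7 (by rw [hq₁def]; dsimp only; rw [if_neg hc])
    -- the column j must be marked
    rcases hcj : ρc j with b | y
    swap
    · -- j unmarked : contradiction
      exfalso
      rcases hri : ρr i with a | x
      · exact h2 (hvmix1 i j a y hri hcj)
      rcases hrk : ρr k with a' | x'
      · exact h4 (hvmix1 k j a' y hrk hcj)
      have hx : x = y := hvdd i j x y hri hcj h2
      have hx' : x' = y := hvdd k j x' y hrk hcj h4
      have : i = k := by
        apply ρr.injective
        rw [hri, hrk, hx, hx']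
      rw [this, hbk] at hbi
      exact absurd hbi (by omega)
    · have hj : j = j2 := by
        rcases hforce_c j b hcj with hA | hA | hA
        · rw [hA, hbm1] at hbj; omega
        · exact hA
        · rw [hA, hbm3] at hbj; omega
      rw [hj] at h2 h4
      have hk : k = i2 := by
        rcases hrk : ρr k with a' | x'
        · rcases hforce_r k a' hrk with hA | hA | hA
          · rw [hA, hbn1] at hbk; omega
          · exact hA
          · rw [hA, hbn3] at hbk; omega
        · exact absurd (hvmix2 k j2 x' f1 hrk hρc2) h4
      rw [hk] at h6
      have hi : i = i1 := by
        rcases hri : ρr i with a | x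
        · rcases hforce_r i a hri with hA | hA | hA
          · exact hA
          · rw [hA, hbn2] at hbi; omega
          · rw [hA, hbn3] at hbi; omega
        · exact absurd (hvmix2 i j2 x f1 hri hρc2) h2
      have hlx : l = j1 := by
        rcases hcl : ρc l with b' | y'
        · rcases hforce_c l b' hcl with hA | hA | hA
          · exact hA
          · rw [hA, hbm2] at hbl; omega
          · rw [hA, hbm3] at hbl; omega
        · exact absurd (hvmix1 i2 l f1 y' hρr2 hcl) h6
      exact ⟨hi, hk, hj, hlx⟩
  have claim : ∀ i k j l : Fin n,
      (p₁ i * v i j * q₂ j * star (v k j)) * (p₂ k * v k l * q₁ l * star (v i l))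
        = if l = j1 then if j = j2 then if k = i2 then if i = i1 then cval else 0
            else 0 else 0 else 0 := by
    intro i k j l
    by_cases hall : i = i1 ∧ k = i2 ∧ j = j2 ∧ l = j1
    · obtain ⟨rfl, rfl, rfl, rfl⟩ := hall
      rw [if_pos rfl, if_pos rfl, if_pos rfl, if_pos rfl]
      rw [hP1, hP2, hQ1, hQ2, hv12, hv22, hv21, hv11, hcval]
      ring
    · have h0 : (p₁ i * v i j * q₂ j * star (v k j))
          * (p₂ k * v k l * q₁ l * star (v i l)) = 0 := by
        by_contra hne
        exact hall (by
          obtain ⟨ha, hb, hc, hd⟩ := hforce i k j l hne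
          exact ⟨ha, hb, hc, hd⟩)
      rw [h0]
      split_ifs with w1 w2 w3 w4
      · exact absurd ⟨w4, w3, w2, w1⟩ hall
      all_goals rfl
  have hval : tau p₁ p₂ q₁ q₂ v = cval := by
    rw [tau_eq_sum]
    simp only [claim]
    simp [Finset.sum_ite_eq']
  rw [hval] at hre
  -- but cval has nonzero imaginary part
  have : (cval).im ≠ 0 := by
    rw [hcval]
    rw [hf0, hf1]
    exact coreU_im
  exact this hre
end

section
/- Let n = n₁+⋯+n_k = p+q with k ≥ 4 and min(p,q) = 2, all n_i ≥ 1. Set G = U(n), L = U(n₁)×⋯×U(n_k), G' = O(n), and let H ⊂ U(n) be conjugate by an element of O(n) to the block-diagonal U(2)×U(n−2). Then L·G'·H ≠ G. -/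
open Matrix
open scoped Pointwise

open Function

def IsRealMatrix {m n : Type*} (A : Matrix m n ℂ) : Prop :=
  ∀ i j, (A i j).im = 0

namespace IsRealMatrix

variable {l m n : Type*} {A : Matrix l m ℂ}

theorem mul [Fintype m] {B : Matrix m n ℂ} (hA : IsRealMatrix A) (hB : IsRealMatrix B) :
    IsRealMatrix (A * B) := fun i j => by
  simp [mul_apply, Complex.im_sum, Complex.mul_im, hA i, hB _ j]

theorem conjTranspose (hA : IsRealMatrix A) : IsRealMatrix Aᴴ := fun i j => by
  simp [hA j i]

end IsRealMatrix

theorem isRealMatrix_diagonal {n : Type*} [DecidableEq n] {d : n → ℂ} (hd : ∀ i, (d i).im = 0) :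
    IsRealMatrix (diagonal d) := fun i j => by
  by_cases hij : i = j
  · simp [hij, hd]
  · simp [hij]

theorem Matrix.commute_diagonal_of_apply_eq_zero {n R : Type*} [Fintype n] [DecidableEq n]
    [CommSemiring R] {A : Matrix n n R} {d : n → R} (h : ∀ i j, d i ≠ d j → A i j = 0) :
    Commute A (diagonal d) := by
  ext i j
  rw [mul_diagonal, diagonal_mul]
  by_cases hij : d i = d j
  · rw [hij, mul_comm]
  · simp [h i j hij]

theorem star_mul_conj_mul_eq {R : Type*} [Monoid R] [StarMul R] {l g w d e : R}
    (hl : star l * l = 1) (hd : d * star d = 1) (hde : Commute d e) :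
    star l * (l * g * w * d * e * star (l * g * w * d)) * l = g * w * e * star (g * w) := by
  have hded : ∀ x, d * (e * (star d * x)) = e * x := fun x => by
    rw [← mul_assoc, ← mul_assoc, hde.eq, mul_assoc e, hd, mul_one]
  simp only [star_mul, ← mul_assoc, hl, one_mul]
  simp only [mul_assoc, hl, mul_one, hded]

theorem Matrix.conjTranspose_mul_mul_apply_of_support {ι κ R : Type*} [Fintype ι] [Semiring R]
    [StarRing R] (blk : ι → κ) {L M : Matrix ι ι R} (hL : ∀ i j, blk i ≠ blk j → L i j = 0)
    {S : Set ι} (hS : S.InjOn blk) (hM : ∀ s t, M s t ≠ 0 → s ∈ S ∧ t ∈ S) {a b : ι}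
    (ha : a ∈ S) (hb : b ∈ S) {i j : ι} (hi : blk i = blk a) (hj : blk j = blk b) :
    (Lᴴ * M * L) i j = star (L a i) * M a b * L b j := by
  rw [mul_apply, Finset.sum_eq_single b, mul_apply, Finset.sum_eq_single a, conjTranspose_apply]
  · intro s _ hsa
    by_cases hs : s ∈ S
    · rw [conjTranspose_apply, hL s i fun h => hsa (hS hs ha (h.trans hi)), star_zero, zero_mul]
    · rw [not_imp_comm.mp (fun h => (hM s b h).1) hs, mul_zero]
  · simp
  · intro t _ htb
    by_cases ht : t ∈ S
    · rw [hL t j fun h => htb (hS ht hb (h.trans hj)), mul_zero]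
    · rw [mul_apply, Finset.sum_eq_zero fun s _ => by
        rw [not_imp_comm.mp (fun h => (hM s t h).2) ht, mul_zero], zero_mul]
  · simp

theorem im_mul_mul_eq_zero_of_cycle {x y z a b c : ℂ} (hx : x ≠ 0) (hy : y ≠ 0) (hz : z ≠ 0)
    (hxy : (star x * a * y).im = 0) (hyz : (star y * b * z).im = 0)
    (hzx : (star z * c * x).im = 0) : (a * b * c).im = 0 := by
  have hprod : (star x * a * y) * (star y * b * z) * (star z * c * x)
      = ((Complex.normSq x * Complex.normSq y * Complex.normSq z : ℝ) : ℂ) * (a * b * c) := by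
    simp only [Complex.star_def, Complex.ofReal_mul, ← Complex.mul_conj]
    ring
  have im_mul : ∀ u v : ℂ, u.im = 0 → v.im = 0 → (u * v).im = 0 := fun u v hu hv => by
    rw [Complex.mul_im, hu, hv, mul_zero, zero_mul, add_zero]
  have him := im_mul _ _ (im_mul _ _ hxy hyz) hzx
  rw [hprod, Complex.im_ofReal_mul] at him
  exact (mul_eq_zero.mp him).resolve_left (mul_pos (mul_pos (Complex.normSq_pos.mpr hx)
    (Complex.normSq_pos.mpr hy)) (Complex.normSq_pos.mpr hz)).ne'

theorem Matrix.exists_apply_ne_zero_of_mem_unitaryGroup {ι : Type*} [Fintype ι] [DecidableEq ι]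
    {L : Matrix ι ι ℂ} (hL : L ∈ unitaryGroup ι ℂ) (a : ι) : ∃ i, L a i ≠ 0 := by
  by_contra! h
  have h1 : (L * star L) a a = 1 := by rw [mem_unitaryGroup_iff.mp hL, one_apply_eq]
  simp [mul_apply, h] at h1

theorem Matrix.not_isRealMatrix_conjTranspose_mul_mul {ι κ : Type*} [Fintype ι] [DecidableEq ι]
    (blk : ι → κ) {L M : Matrix ι ι ℂ} (hLu : L ∈ unitaryGroup ι ℂ)
    (hL : ∀ i j, blk i ≠ blk j → L i j = 0) {S : Set ι} (hS : S.InjOn blk)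
    (hM : ∀ s t, M s t ≠ 0 → s ∈ S ∧ t ∈ S) {a b c : ι} (ha : a ∈ S) (hb : b ∈ S) (hc : c ∈ S)
    (hcycle : (M a b * M b c * M c a).im ≠ 0) : ¬ IsRealMatrix (Lᴴ * M * L) := by
  intro hreal
  obtain ⟨i, hi⟩ := exists_apply_ne_zero_of_mem_unitaryGroup hLu a
  obtain ⟨j, hj⟩ := exists_apply_ne_zero_of_mem_unitaryGroup hLu b
  obtain ⟨m, hm⟩ := exists_apply_ne_zero_of_mem_unitaryGroup hLu c
  have hblk : ∀ {x y}, L x y ≠ 0 → blk y = blk x := fun hxy => (not_imp_comm.mp (hL _ _) hxy).symm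
  have entry : ∀ {x y i j}, x ∈ S → y ∈ S → L x i ≠ 0 → L y j ≠ 0 →
      (Lᴴ * M * L) i j = star (L x i) * M x y * L y j := fun hx hy hxi hyj =>
    conjTranspose_mul_mul_apply_of_support blk hL hS hM hx hy (hblk hxi) (hblk hyj)
  refine hcycle (im_mul_mul_eq_zero_of_cycle hi hj hm ?_ ?_ ?_)
  · rw [← entry ha hb hi hj]; exact hreal i j
  · rw [← entry hb hc hj hm]; exact hreal j m
  · rw [← entry hc ha hm hi]; exact hreal m i

theorem Matrix.exists_mem_unitaryGroup_apply_eq {𝕜 ι κ : Type*} [RCLike 𝕜] [Fintype ι]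
    [DecidableEq ι] {e : κ → ι} (he : Injective e) {u : κ → EuclideanSpace 𝕜 ι}
    (hu : Orthonormal 𝕜 u) :
    ∃ V ∈ unitaryGroup ι 𝕜, ∀ i j, V i (e j) = u j i := by
  have hrestrict :
      (Set.range e).domRestrict (extend e u 0) = u ∘ (Equiv.ofInjective e he).symm := by
    ext1 x
    obtain ⟨j, rfl⟩ := (Equiv.ofInjective e he).surjective x
    simp [he.extend_apply]
  obtain ⟨b, hb⟩ := Orthonormal.exists_orthonormalBasis_extension_of_card_eq
    (finrank_euclideanSpace (𝕜 := 𝕜) (ι := ι)) (s := Set.range e)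
    (hrestrict ▸ hu.comp _ (Equiv.injective _))
  refine ⟨(EuclideanSpace.basisFun ι 𝕜).toBasis.toMatrix b.toBasis,
    (EuclideanSpace.basisFun ι 𝕜).toMatrix_orthonormalBasis_mem_unitary b, fun i j => ?_⟩
  rw [Module.Basis.toMatrix_apply, OrthonormalBasis.coe_toBasis, hb _ (Set.mem_range_self j),
    he.extend_apply]
  rfl

theorem Matrix.exists_mem_unitaryGroup_conj_diagonal {𝕜 ι κ : Type*} [RCLike 𝕜] [Fintype ι]
    [DecidableEq ι] [Fintype κ] {e : κ → ι} (he : Injective e) {u : κ → EuclideanSpace 𝕜 ι}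
    (hu : Orthonormal 𝕜 u) {d : ι → 𝕜} (hd_range : ∀ j, d (e j) = 1)
    (hd_compl : ∀ i ∉ Set.range e, d i = 0) :
    ∃ V ∈ unitaryGroup ι 𝕜, ∀ s t, (V * diagonal d * Vᴴ) s t = ∑ j, u j s * star (u j t) := by
  obtain ⟨V, hV, hVe⟩ := exists_mem_unitaryGroup_apply_eq he hu
  refine ⟨V, hV, fun s t => ?_⟩
  rw [mul_apply]
  simp only [mul_diagonal, conjTranspose_apply]
  refine (Fintype.sum_of_injective e he _ _ (fun i hi => by simp [hd_compl i hi]) fun j => ?_).symm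
  rw [hd_range, mul_one, hVe, hVe]

theorem inner_toLp_extend_zero {𝕜 ι κ : Type*} [RCLike 𝕜] [Fintype ι] [Fintype κ] {q : κ → ι}
    (hq : Injective q) (x y : EuclideanSpace 𝕜 κ) :
    inner 𝕜 (WithLp.toLp 2 (extend q x 0)) (WithLp.toLp 2 (extend q y 0)) = inner 𝕜 x y := by
  simp only [PiLp.inner_apply]
  refine (Fintype.sum_of_injective q hq _ _ (fun i hi => ?_)
    fun a => by simp [hq.extend_apply]).symm
  simp [extend_apply' _ _ _ (by simpa using hi)]

theorem sum_range_lt_sum_range {ns : ℕ → ℕ} {k a b : ℕ} (hns : ∀ i < k, 0 < ns i) (hab : a < b)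
    (hbk : b ≤ k) : ∑ t ∈ Finset.range a, ns t < ∑ t ∈ Finset.range b, ns t :=
  Finset.sum_lt_sum_of_subset (Finset.range_subset_range.2 hab.le) (Finset.mem_range.2 hab)
    (by simp) (hns a (by omega)) fun _ _ _ => Nat.zero_le _

theorem blkIdx_sum_range {ns : ℕ → ℕ} {k a : ℕ} (hns : ∀ i < k, 0 < ns i) (ha : a < k) :
    blkIdx ns k (∑ t ∈ Finset.range a, ns t) = a := by
  unfold blkIdx
  convert Finset.card_range a
  ext j
  simp only [Finset.mem_filter, Finset.mem_range]
  constructor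
  · rintro ⟨hjk, hle⟩
    by_contra! haj
    exact hle.not_gt (sum_range_lt_sum_range hns (Nat.lt_succ_of_le haj) hjk)
  · exact fun hja => ⟨hja.trans ha, Finset.sum_le_sum_of_subset (Finset.range_subset_range.2 hja)⟩

theorem blkIdx_two_blocks {n m : ℕ} (hm : m < n) :
    blkIdx (fun t => if t = 0 then 2 else n - 2) 2 m = if m < 2 then 0 else 1 := by
  unfold blkIdx
  rw [show Finset.range 2 = {0, 1} from rfl, Finset.filter_insert, Finset.filter_singleton]
  simp only [Finset.sum_range_succ, Finset.sum_range_zero]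
  split_ifs <;> simp_all <;> omega

noncomputable def witnessPair : Fin 2 → EuclideanSpace ℂ (Fin 4) :=
  ![!₂[1 / 2, 1 / 2, 1 / 2, 1 / 2], !₂[0, 1 / 2, Complex.I / 2, -(1 + Complex.I) / 2]]

noncomputable def witnessProj : Matrix (Fin 4) (Fin 4) ℂ :=
  of fun a b => ∑ j, witnessPair j a * star (witnessPair j b)

theorem orthonormal_witnessPair : Orthonormal ℂ witnessPair := by
  rw [orthonormal_iff_ite]
  intro i j
  fin_cases i <;> fin_cases j <;> rw [PiLp.inner_apply] <;>
    simp [witnessPair, Fin.sum_univ_four, Complex.ext_iff, map_ofNat,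
      -inner_self_eq_norm_sq_to_K] <;> norm_num

theorem witnessProj_cycle_im_ne_zero :
    (witnessProj 0 1 * witnessProj 1 2 * witnessProj 2 0).im ≠ 0 := by
  simp [witnessProj, witnessPair, Fin.sum_univ_two, map_ofNat]

def projFirstTwo (n : ℕ) : Matrix (Fin n) (Fin n) ℂ :=
  diagonal fun i => if (i : ℕ) < 2 then 1 else 0

theorem isRealMatrix_projFirstTwo (n : ℕ) : IsRealMatrix (projFirstTwo n) :=
  isRealMatrix_diagonal fun i => by split_ifs <;> simp

theorem commute_projFirstTwo {n : ℕ} {d : Matrix (Fin n) (Fin n) ℂ}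
    (hd : d ∈ blockUnitary n 2 (fun t => if t = 0 then 2 else n - 2)) :
    Commute d (projFirstTwo n) := by
  refine commute_diagonal_of_apply_eq_zero fun i j hij => hd.2 i j ?_
  rw [blkIdx_two_blocks i.isLt, blkIdx_two_blocks j.isLt]
  split_ifs at hij ⊢ <;> simp_all

theorem exists_mem_unitaryGroup_witness {n : ℕ} (hn : 2 ≤ n) {q : Fin 4 → Fin n}
    (hq : Injective q) :
    ∃ V ∈ unitaryGroup (Fin n) ℂ,
      (∀ a b, (V * projFirstTwo n * Vᴴ) (q a) (q b) = witnessProj a b) ∧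
      ∀ s t, (V * projFirstTwo n * Vᴴ) s t ≠ 0 → s ∈ Set.range q ∧ t ∈ Set.range q := by
  have hu : Orthonormal ℂ fun j => WithLp.toLp 2 (extend q (witnessPair j) 0) := by
    rw [orthonormal_iff_ite]
    intro i j
    rw [inner_toLp_extend_zero hq, orthonormal_iff_ite.mp orthonormal_witnessPair]
  obtain ⟨V, hV, hVE⟩ := exists_mem_unitaryGroup_conj_diagonal (Fin.castLE_injective hn) hu
    (d := fun i => if (i : ℕ) < 2 then 1 else 0) (fun j => if_pos j.isLt)
    fun i hi => if_neg fun h => hi ⟨⟨i, h⟩, rfl⟩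
  refine ⟨V, hV, fun a b => ?_, fun s t hst => ?_⟩
  · rw [projFirstTwo, hVE]
    simp [hq.extend_apply, witnessProj]
  · by_contra! hout
    refine hst ((hVE s t).trans (Finset.sum_eq_zero fun j _ => ?_))
    by_cases hs : s ∈ Set.range q
    · simp [extend_apply' _ _ t (by simpa using hout hs)]
    · simp [extend_apply' _ _ s (by simpa using hs)]

theorem Matrix.eq_mul_mul_mul_of_mul_star_mem_mul_conj {ι : Type*} [Fintype ι] [DecidableEq ι]
    {L G K : Set (Matrix ι ι ℂ)} {V w : Matrix ι ι ℂ} (hw : w ∈ unitaryGroup ι ℂ)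
    (hV : V * star w ∈ L * G * (fun x => w * x * w⁻¹) '' K) :
    ∃ l ∈ L, ∃ g ∈ G, ∃ d ∈ K, V = l * g * w * d := by
  obtain ⟨_, ⟨l, hl, g, hg, rfl⟩, _, ⟨d, hd, rfl⟩, hlgd⟩ := hV
  have hww : star w * w = 1 := mem_unitaryGroup_iff'.mp hw
  have hinv : w⁻¹ * w = 1 := by rwa [inv_eq_left_inv hww]
  refine ⟨l, hl, g, hg, d, hd, ?_⟩
  calc V = V * star w * w := by rw [mul_assoc, hww, mul_one]
    _ = l * g * w * d := by rw [← hlgd]; simp only [mul_assoc, hinv, mul_one]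

theorem k_blocks_minpq_two_not_surjective_general
    (n k : ℕ) (hk : 4 ≤ k) (ns : ℕ → ℕ) (hns : ∀ i < k, 0 < ns i)
    (hn : n = ∑ t ∈ Finset.range k, ns t)
    (H : Set (Matrix (Fin n) (Fin n) ℂ))
    (w : Matrix (Fin n) (Fin n) ℂ) (hw : w ∈ realOrthogonal n)
    (hH : H = (fun x => w * x * w⁻¹) ''
      blockUnitary n 2 (fun t => if t = 0 then 2 else n - 2)) :
    blockUnitary n k ns * realOrthogonal n * H
      ≠ (Matrix.unitaryGroup (Fin n) ℂ : Set (Matrix (Fin n) (Fin n) ℂ)) := by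
  intro hG
  set blk : Fin n → ℕ := fun i => blkIdx ns k i
  obtain ⟨q, hq⟩ : ∃ q : Fin 4 → Fin n, ∀ a, blk (q a) = a :=
    ⟨fun a => ⟨_, hn ▸ sum_range_lt_sum_range hns (by omega) le_rfl⟩,
      fun a => blkIdx_sum_range hns (by omega)⟩
  have hq_inj : Injective (blk ∘ q) := fun a b h => Fin.ext (by simpa [hq] using h)
  have h4n : 4 ≤ n := by simpa using Fintype.card_le_of_injective q hq_inj.of_comp
  obtain ⟨V, hV, hMq, hMsupp⟩ := exists_mem_unitaryGroup_witness (by omega) hq_inj.of_comp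
  have hQ : V * star w ∈ blockUnitary n k ns * realOrthogonal n * H :=
    hG ▸ mul_mem hV (Unitary.star_mem hw.1)
  rw [hH] at hQ
  obtain ⟨l, hl, g, hg, d, hd, rfl⟩ := eq_mul_mul_mul_of_mul_star_mem_mul_conj hw.1 hQ
  have hgw : IsRealMatrix (g * w) := IsRealMatrix.mul hg.2 hw.2
  have hreal :
      IsRealMatrix (star l * (l * g * w * d * projFirstTwo n * star (l * g * w * d)) * l) := by
    rw [star_mul_conj_mul_eq (mem_unitaryGroup_iff'.mp hl.1) (mem_unitaryGroup_iff.mp hd.1)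
      (commute_projFirstTwo hd)]
    exact (hgw.mul (isRealMatrix_projFirstTwo n)).mul hgw.conjTranspose
  refine not_isRealMatrix_conjTranspose_mul_mul blk hl.1 hl.2 hq_inj.injOn_range hMsupp
    (Set.mem_range_self 0) (Set.mem_range_self 1) (Set.mem_range_self 2) ?_ hreal
  rw [hMq, hMq, hMq]
  exact witnessProj_cycle_im_ne_zero

/-- Proposition 5.7: `n = n₁+⋯+n_k = p+q`, `k ≥ 4`, `min(p,q) = 2`,
all `nᵢ ≥ 1`; `L = U(n₁)×⋯×U(n_k)` block-diagonal, `G' = O(n)`, and `H` an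
`O(n)`-conjugate of the block-diagonal `U(2)×U(n−2)`.  Then `L·G'·H ⊊ U(n)`. -/
theorem k_blocks_minpq_two_not_surjective
    (n k p q : ℕ) (hk : 4 ≤ k) (ns : ℕ → ℕ) (hns : ∀ i < k, 0 < ns i)
    (hn : n = ∑ t ∈ Finset.range k, ns t)
    (hpq : n = p + q) (hmin : min p q = 2)
    (H : Set (Matrix (Fin n) (Fin n) ℂ))
    (w : Matrix (Fin n) (Fin n) ℂ) (hw : w ∈ realOrthogonal n)
    (hH : H = (fun x => w * x * w⁻¹) ''
      blockUnitary n 2 (fun t => if t = 0 then 2 else n - 2)) :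
    blockUnitary n k ns * realOrthogonal n * H
      ≠ (Matrix.unitaryGroup (Fin n) ℂ : Set (Matrix (Fin n) (Fin n) ℂ)) :=
  k_blocks_minpq_two_not_surjective_general n k hk ns hns hn H w hw hH
end
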